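/- arXiv:2407.19602 — 8 statements merged into one kernel-verified Lean document; each statement's English description precedes it below -/
import Mathlib

section
/- Let c > 0, Δ ∈ ℝ, and for ψ > max(0, Δ) define E(ψ) = 𝔼[min(1, c·((ψ-Δ)/ψ)^S)] where S ~ Poisson(ψ). Then E is nondecreasing in ψ, i.e., dE/dψ ≥ 0. -/
/-!
Put `E(ψ) = e^{-ψ} ∑ₛ min (a (ψ-p)^s, b (ψ-q)^s) / s!` with `p ≤ q`; the theorem is the case
`(a, p, b, q) = (1, 0, c, Δ)` when `Δ ≥ 0` and `(c, Δ, 1, 0)` when `Δ ≤ 0`. Since the ratio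
`(ψ-q)/(ψ-p)` lies in `(0, 1]` and increases with `ψ`, the indices at which the first branch is the
smaller one form an initial segment `{s < k}` (possibly all of `ℕ`) that can only grow with `ψ`.
Hence just to the right of any point `E` agrees with `e^{-ψ} (a S_k(ψ-p) + b (e^{ψ-q} - S_k(ψ-q)))`,
`S_k` the `k`-th partial sum of the exponential series, whose derivative
`e^{-ψ} (b (ψ-q)^{k-1} - a (ψ-p)^{k-1}) / (k-1)!` is nonnegative because `k - 1` is still in the
segment. A continuous function with nonnegative right derivatives is monotone.
-/

open Real Set Filter Finset Topology
open scoped Nat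

noncomputable def expPartialSum (k : ℕ) (x : ℝ) : ℝ := ∑ s ∈ range k, x ^ s / s !

theorem expPartialSum_succ (k : ℕ) (x : ℝ) :
    expPartialSum (k + 1) x = expPartialSum k x + x ^ k / k ! :=
  sum_range_succ _ _

theorem hasSum_pow_div_factorial_exp (x : ℝ) : HasSum (fun n : ℕ => x ^ n / n !) (exp x) := by
  rw [Real.exp_eq_exp_ℝ]
  exact NormedSpace.expSeries_div_hasSum_exp x

theorem tsum_pow_div_factorial_add (k : ℕ) (x : ℝ) :
    ∑' i : ℕ, x ^ (i + k) / (i + k) ! = exp x - expPartialSum k x := by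
  rw [← (hasSum_pow_div_factorial_exp x).tsum_eq,
    ← (Real.summable_pow_div_factorial x).sum_add_tsum_nat_add k, expPartialSum]
  ring

theorem hasDerivAt_expPartialSum_succ (k : ℕ) (x : ℝ) :
    HasDerivAt (expPartialSum (k + 1)) (expPartialSum k x) x := by
  induction k with
  | zero =>
    have h : expPartialSum 1 = fun _ => 1 := by funext; simp [expPartialSum]
    simpa [h, expPartialSum] using hasDerivAt_const x (1 : ℝ)
  | succ k ih =>
    have h : expPartialSum (k + 2) =
        fun y => expPartialSum (k + 1) y + y ^ (k + 1) / (k + 1) ! :=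
      funext fun y => expPartialSum_succ _ _
    rw [h, expPartialSum_succ]
    refine (ih.add ((hasDerivAt_pow (k + 1) x).div_const ((k + 1) ! : ℝ))).congr_deriv ?_
    rw [Nat.factorial_succ]
    push_cast
    field_simp

theorem monotoneOn_of_exists_nonneg_hasDerivWithinAt_Ici {f : ℝ → ℝ} {s : Set ℝ}
    (hs : s.OrdConnected) (hf : ContinuousOn f s)
    (hf' : ∀ x ∈ s, ∃ d, 0 ≤ d ∧ HasDerivWithinAt f d (Ici x) x) : MonotoneOn f s := by
  intro x hx y hy hxy
  have hIcc : Icc x y ⊆ s := hs.out hx hy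
  choose! d hd_nonneg hd using hf'
  exact image_le_of_deriv_right_le_deriv_boundary (f' := 0) continuousOn_const
    (fun z _ => hasDerivWithinAt_const z _ (f x)) le_rfl (hf.mono hIcc)
    (fun z hz => hd z (hIcc (Ico_subset_Icc_self hz)))
    (fun z hz => hd_nonneg z (hIcc (Ico_subset_Icc_self hz))) (right_mem_Icc.2 hxy)

section

variable {a p b q : ℝ}

noncomputable def poissonMin (a p b q ψ : ℝ) : ℝ :=
  exp (-ψ) * ∑' s : ℕ, ((s ! : ℝ))⁻¹ * min (a * (ψ - p) ^ s) (b * (ψ - q) ^ s)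

noncomputable def splitSum (a p b q : ℝ) (k : ℕ) (ψ : ℝ) : ℝ :=
  exp (-ψ) * (a * expPartialSum k (ψ - p) + b * (exp (ψ - q) - expPartialSum k (ψ - q)))

theorem norm_inv_factorial_mul_min_le {u v R : ℝ} (hu : |u| ≤ R) (hv : |v| ≤ R) (s : ℕ) :
    ‖((s ! : ℝ))⁻¹ * min (a * u ^ s) (b * v ^ s)‖ ≤ (|a| + |b|) * (R ^ s / s !) := by
  have hmin : |min (a * u ^ s) (b * v ^ s)| ≤ |a| * R ^ s + |b| * R ^ s := by
    have hR : 0 ≤ R := (abs_nonneg u).trans hu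
    refine abs_min_le_max_abs_abs.trans (max_le ?_ ?_) <;> rw [abs_mul, abs_pow]
    · exact le_add_of_le_of_nonneg (by gcongr) (by positivity)
    · exact le_add_of_nonneg_of_le (by positivity) (by gcongr)
  rw [Real.norm_eq_abs, abs_mul, abs_inv, Nat.abs_cast, div_eq_inv_mul]
  calc ((s ! : ℝ))⁻¹ * |min (a * u ^ s) (b * v ^ s)|
      ≤ ((s ! : ℝ))⁻¹ * (|a| * R ^ s + |b| * R ^ s) := by gcongr
    _ = _ := by ring

theorem summable_inv_factorial_mul_min (a b u v : ℝ) :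
    Summable fun s : ℕ => ((s ! : ℝ))⁻¹ * min (a * u ^ s) (b * v ^ s) :=
  ((Real.summable_pow_div_factorial _).mul_left _).of_norm_bounded
    (norm_inv_factorial_mul_min_le (le_max_left |u| |v|) (le_max_right _ _))

theorem continuous_poissonMin : Continuous (poissonMin a p b q) := by
  refine (continuous_neg.rexp).mul (continuous_iff_continuousAt.2 fun x => ?_)
  set R := |x - p| + |x - q| + 1
  refine (continuousOn_tsum (s := Icc (x - 1) (x + 1)) (fun s => by fun_prop)
    ((Real.summable_pow_div_factorial R).mul_left (|a| + |b|)) fun s ψ hψ =>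
      norm_inv_factorial_mul_min_le ?_ ?_ s).continuousAt
    (Icc_mem_nhds (by linarith) (by linarith))
  all_goals
    obtain ⟨h1, h2⟩ := hψ
    rw [abs_le]
    constructor <;> linarith [le_abs_self (x - p), neg_abs_le (x - p), le_abs_self (x - q),
      neg_abs_le (x - q), abs_nonneg (x - p), abs_nonneg (x - q)]

theorem hasDerivAt_splitSum_succ (k : ℕ) (ψ : ℝ) :
    HasDerivAt (splitSum a p b q (k + 1))
      (exp (-ψ) * (b * (ψ - q) ^ k - a * (ψ - p) ^ k) / k !) ψ := by
  have hS (r : ℝ) :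
      HasDerivAt (fun ψ => expPartialSum (k + 1) (ψ - r)) (expPartialSum k (ψ - r)) ψ :=
    (hasDerivAt_expPartialSum_succ k (ψ - r)).comp_sub_const ψ r
  have hE : HasDerivAt (fun ψ => exp (ψ - q)) (exp (ψ - q)) ψ := by
    simpa using ((hasDerivAt_id ψ).sub_const q).exp
  refine ((hasDerivAt_neg ψ).exp.mul
    (((hS p).const_mul a).add ((hE.sub (hS q)).const_mul b))).congr_deriv ?_
  simp only [Pi.add_apply, Pi.sub_apply, expPartialSum_succ]
  field_simp
  ring

theorem splitSum_zero : splitSum a p b q 0 = fun _ => b * exp (-q) := by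
  funext ψ
  simp only [splitSum, expPartialSum, range_zero, sum_empty, mul_zero, sub_zero, zero_add]
  rw [mul_left_comm, ← exp_add]
  ring_nf

theorem poissonMin_eq_splitSum {k : ℕ} {ψ : ℝ} (hlt : ∀ s < k, a * (ψ - p) ^ s ≤ b * (ψ - q) ^ s)
    (hge : ∀ s, k ≤ s → b * (ψ - q) ^ s ≤ a * (ψ - p) ^ s) :
    poissonMin a p b q ψ = splitSum a p b q k ψ := by
  rw [poissonMin, splitSum, ← (summable_inv_factorial_mul_min a b _ _).sum_add_tsum_nat_add k,
    expPartialSum, mul_sum, ← tsum_pow_div_factorial_add, ← tsum_mul_left]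
  congr 2
  · refine sum_congr rfl fun s hs => ?_
    rw [min_eq_left (hlt s (mem_range.1 hs))]
    ring
  · refine tsum_congr fun i => ?_
    rw [min_eq_right (hge _ (Nat.le_add_left k i))]
    ring

theorem poissonMin_eq_of_forall_le {ψ : ℝ} (h : ∀ s : ℕ, a * (ψ - p) ^ s ≤ b * (ψ - q) ^ s) :
    poissonMin a p b q ψ = a * exp (-p) := by
  have hsum : ∑' s : ℕ, ((s ! : ℝ))⁻¹ * (a * (ψ - p) ^ s) = a * exp (ψ - p) := by
    rw [← ((hasSum_pow_div_factorial_exp (ψ - p)).mul_left a).tsum_eq]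
    exact tsum_congr fun s => by ring
  rw [poissonMin, tsum_congr fun s => by rw [min_eq_left (h s)], hsum, mul_left_comm, ← exp_add]
  ring_nf

theorem mul_pow_sub_le_of_le_of_le (ha : 0 ≤ a) (hpq : p ≤ q) {x y : ℝ} (hqx : q < x)
    (hxy : x ≤ y) {s : ℕ} (h : a * (x - p) ^ s ≤ b * (x - q) ^ s) :
    a * (y - p) ^ s ≤ b * (y - q) ^ s := by
  have hcross : ((y - p) * (x - q)) ^ s ≤ ((x - p) * (y - q)) ^ s :=
    pow_le_pow_left₀ (mul_nonneg (by linarith) (by linarith))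
      (by nlinarith [mul_nonneg (sub_nonneg.2 hxy) (sub_nonneg.2 hpq)]) s
  rw [mul_pow, mul_pow] at hcross
  refine le_of_mul_le_mul_right ?_ (pow_pos (sub_pos.2 hqx) s)
  calc a * (y - p) ^ s * (x - q) ^ s = a * ((y - p) ^ s * (x - q) ^ s) := by ring
    _ ≤ a * ((x - p) ^ s * (y - q) ^ s) := mul_le_mul_of_nonneg_left hcross ha
    _ = a * (x - p) ^ s * (y - q) ^ s := by ring
    _ ≤ b * (x - q) ^ s * (y - q) ^ s :=
      mul_le_mul_of_nonneg_right h (pow_nonneg (by linarith) s)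
    _ = b * (y - q) ^ s * (x - q) ^ s := by ring

theorem mul_pow_sub_lt_of_lt_of_le (ha : 0 ≤ a) (hpq : p ≤ q) {ψ : ℝ} (hqψ : q < ψ) {k s : ℕ}
    (hks : k ≤ s) (h : b * (ψ - q) ^ k < a * (ψ - p) ^ k) : b * (ψ - q) ^ s < a * (ψ - p) ^ s := by
  obtain ⟨m, rfl⟩ := Nat.exists_eq_add_of_le hks
  calc b * (ψ - q) ^ (k + m) = b * (ψ - q) ^ k * (ψ - q) ^ m := by ring
    _ < a * (ψ - p) ^ k * (ψ - q) ^ m := mul_lt_mul_of_pos_right h (pow_pos (by linarith) m)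
    _ ≤ a * (ψ - p) ^ k * (ψ - p) ^ m :=
      mul_le_mul_of_nonneg_left (pow_le_pow_left₀ (by linarith) (by linarith) m)
        (mul_nonneg ha (pow_nonneg (by linarith) k))
    _ = a * (ψ - p) ^ (k + m) := by ring

theorem poissonMin_eventuallyEq_splitSum (ha : 0 ≤ a) (hpq : p ≤ q) {x : ℝ} (hx : q < x) {k : ℕ}
    (hk : b * (x - q) ^ k < a * (x - p) ^ k) (hlt : ∀ s < k, a * (x - p) ^ s ≤ b * (x - q) ^ s) :
    poissonMin a p b q =ᶠ[𝓝[≥] x] splitSum a p b q k := by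
  have hk_near : ∀ᶠ ψ in 𝓝 x, b * (ψ - q) ^ k < a * (ψ - p) ^ k :=
    ContinuousAt.eventually_lt (by fun_prop) (by fun_prop) hk
  filter_upwards [nhdsWithin_le_nhds hk_near, self_mem_nhdsWithin] with ψ hψk hxψ
  exact poissonMin_eq_splitSum (fun s hs => mul_pow_sub_le_of_le_of_le ha hpq hx hxψ (hlt s hs))
    fun s hs => (mul_pow_sub_lt_of_lt_of_le ha hpq (hx.trans_le hxψ) hs hψk).le

theorem exists_nonneg_hasDerivWithinAt_Ici_poissonMin (ha : 0 ≤ a) (hpq : p ≤ q) {x : ℝ}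
    (hx : q < x) : ∃ d, 0 ≤ d ∧ HasDerivWithinAt (poissonMin a p b q) d (Ici x) x := by
  by_cases hall : ∀ s : ℕ, a * (x - p) ^ s ≤ b * (x - q) ^ s
  · refine ⟨0, le_rfl, (hasDerivWithinAt_const x _ (a * exp (-p))).congr (fun ψ hψ => ?_) ?_⟩
    · exact poissonMin_eq_of_forall_le fun s => mul_pow_sub_le_of_le_of_le ha hpq hx hψ (hall s)
    · exact poissonMin_eq_of_forall_le hall
  push Not at hall
  obtain ⟨k, hk, hlt⟩ : ∃ k, b * (x - q) ^ k < a * (x - p) ^ k ∧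
      ∀ s < k, a * (x - p) ^ s ≤ b * (x - q) ^ s :=
    ⟨Nat.find hall, Nat.find_spec hall, fun s hs => not_lt.1 (Nat.find_min hall hs)⟩
  have hE := poissonMin_eventuallyEq_splitSum ha hpq hx hk hlt
  rcases k with _ | m
  · rw [splitSum_zero] at hE
    exact ⟨0, le_rfl, (hasDerivWithinAt_const x _ _).congr_of_eventuallyEq hE
      (hE.eq_of_nhdsWithin self_mem_Ici)⟩
  · refine ⟨_, ?_, (hasDerivAt_splitSum_succ m x).hasDerivWithinAt.congr_of_eventuallyEq hE
      (hE.eq_of_nhdsWithin self_mem_Ici)⟩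
    have := sub_nonneg.2 (hlt m m.lt_succ_self)
    positivity

theorem monotoneOn_poissonMin (ha : 0 ≤ a) (hpq : p ≤ q) :
    MonotoneOn (poissonMin a p b q) (Ioi q) :=
  monotoneOn_of_exists_nonneg_hasDerivWithinAt_Ici ordConnected_Ioi
    continuous_poissonMin.continuousOn
    fun _ hx => exists_nonneg_hasDerivWithinAt_Ici_poissonMin ha hpq hx

end

/-- For `c > 0`, `Δ ∈ ℝ`, the function
`E(ψ) = 𝔼[min(1, c·((ψ-Δ)/ψ)^S)]` with `S ~ Poisson(ψ)`, i.e.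
`E(ψ) = e^{-ψ} ∑_{s} (1/s!) min(ψ^s, c(ψ-Δ)^s)`, is nondecreasing on
`{ψ : max 0 Δ < ψ}`. -/
theorem stmt_0 (c Δ : ℝ) (hc : 0 < c) :
    MonotoneOn
      (fun ψ : ℝ =>
        Real.exp (-ψ) * ∑' s : ℕ, ((s.factorial : ℝ))⁻¹ * min (ψ ^ s) (c * (ψ - Δ) ^ s))
      {ψ : ℝ | max 0 Δ < ψ} := by
  rcases le_total 0 Δ with hΔ | hΔ
  · convert monotoneOn_poissonMin (b := c) zero_le_one hΔ using 1
    · funext ψ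
      simp [poissonMin]
    · ext
      simp [hΔ]
  · convert monotoneOn_poissonMin (b := 1) hc.le hΔ using 1
    · funext ψ
      simp [poissonMin, min_comm]
    · ext
      simp [hΔ]
end

section
/- Let u, v, x ∈ ℝ^d with u, v nonzero, let ω = (u·v)/(‖u‖‖v‖), and k > 0. Then |u·x|^k |v·x| ≤ D_k(ω) ‖u‖^k ‖v‖ ‖x‖^{k+1}, where D_k(ω) = (k + |ω| c_k(ω))^{(k+1)/2} / (c_k(ω) (k+1)^{(k+1)/2}) and c_k(ω) = sqrt(k + ((k−1)²/4)ω²) − ((k−1)/2)|ω|. -/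
/-!
Write `a, b` for the absolute cosines of the angles between `x` and `u, v`, and `w = |ω|`.
Nonnegativity of the Gram determinant of `u, v, x` gives `a² + b² - 2abw ≤ 1 - w²`.
If `c = c_k(ω)`, the positive root of `c² + (k - 1)wc = k`, then `k + wc` is the largest
eigenvalue of the form `k (û·x)² + c² (v̂·x)²`, so `k a² + c² b² ≤ k + wc`; concretely, for `w < 1`,
`(1 - wc)(k + wc - k a² - c² b²)` is a nonnegative combination of the Gram constraint and a square.
Weighted AM–GM with weights `k/(k+1), 1/(k+1)` applied to `a²` and `(cb)²` then gives
`c a^k b ≤ ((k + wc)/(k + 1))^((k+1)/2) = c D_k(ω)`.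
-/

open Real
open scoped InnerProductSpace

/-- `c_k(ω)`, the positive root `c` of `c ^ 2 + (k - 1) |ω| c = k`. -/
noncomputable def csRoot (k ω : ℝ) : ℝ :=
  √(k + (k - 1) ^ 2 / 4 * ω ^ 2) - (k - 1) / 2 * |ω|

noncomputable def csConst (k ω : ℝ) : ℝ :=
  (k + |ω| * csRoot k ω) ^ ((k + 1) / 2) / (csRoot k ω * (k + 1) ^ ((k + 1) / 2))

theorem csRoot_pos {k : ℝ} (hk : 0 < k) (ω : ℝ) : 0 < csRoot k ω := by
  rw [csRoot, sub_pos]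
  apply lt_sqrt_of_sq_lt
  nlinarith [sq_abs ω]

theorem csRoot_sq_add_mul {k : ℝ} (hk : 0 ≤ k) (ω : ℝ) :
    csRoot k ω ^ 2 + (k - 1) * |ω| * csRoot k ω = k := by
  have hs := sq_sqrt (by positivity : 0 ≤ k + (k - 1) ^ 2 / 4 * ω ^ 2)
  rw [csRoot]
  linear_combination hs - (k - 1) ^ 2 / 4 * sq_abs ω

theorem rpow_mul_le_weighted_mean_sq {k X Y : ℝ} (hk : 0 < k) (hX : 0 ≤ X) (hY : 0 ≤ Y) :
    X ^ k * Y ≤ ((k * X ^ 2 + Y ^ 2) / (k + 1)) ^ ((k + 1) / 2) := by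
  have hk1 : 0 < k + 1 := by linarith
  have hmean := geom_mean_le_arith_mean2_weighted (p₁ := X ^ 2) (p₂ := Y ^ 2)
    (div_nonneg hk.le hk1.le) (div_nonneg zero_le_one hk1.le) (sq_nonneg X) (sq_nonneg Y)
    (by field_simp)
  have hX' : k / (k + 1) * ((k + 1) / 2) = k / 2 := by field_simp
  have hY' : 1 / (k + 1) * ((k + 1) / 2) = 1 / 2 := by field_simp
  calc X ^ k * Y = ((X ^ 2) ^ (k / (k + 1)) * (Y ^ 2) ^ (1 / (k + 1))) ^ ((k + 1) / 2) := by
        rw [mul_rpow (by positivity) (by positivity), ← rpow_mul (sq_nonneg X),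
          ← rpow_mul (sq_nonneg Y), hX', hY', rpow_div_two_eq_sqrt _ (sq_nonneg X),
          rpow_div_two_eq_sqrt _ (sq_nonneg Y), sqrt_sq hX, sqrt_sq hY, rpow_one]
    _ ≤ ((k * X ^ 2 + Y ^ 2) / (k + 1)) ^ ((k + 1) / 2) := by
        gcongr
        calc _ ≤ _ := hmean
          _ = (k * X ^ 2 + Y ^ 2) / (k + 1) := by ring

theorem weighted_sq_add_le_of_gram {k w c a b : ℝ} (hk : 0 < k) (hw0 : 0 ≤ w) (hw1 : w ≤ 1)
    (hc : 0 < c) (hck : c ^ 2 + (k - 1) * w * c = k) (ha : a ^ 2 ≤ 1)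
    (hgram : a ^ 2 + b ^ 2 - 2 * a * b * w ≤ 1 - w ^ 2) :
    k * a ^ 2 + c ^ 2 * b ^ 2 ≤ k + w * c := by
  rcases hw1.lt_or_eq with hw1 | rfl
  · have hwc : w * c < 1 := by
      by_contra! h
      nlinarith [mul_le_mul_of_nonneg_left h hk.le]
    have hsos : (1 - w * c) * (k + w * c - (k * a ^ 2 + c ^ 2 * b ^ 2)) =
        c ^ 2 * (1 - w ^ 2 - (a ^ 2 + b ^ 2 - 2 * a * b * w)) + w * c * (a - c * b) ^ 2 := by
      linear_combination (a ^ 2 - 1) * hck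
    have hnonneg : 0 ≤ (1 - w * c) * (k + w * c - (k * a ^ 2 + c ^ 2 * b ^ 2)) := by
      rw [hsos]
      have := sub_nonneg.2 hgram
      positivity
    linarith [nonneg_of_mul_nonneg_right hnonneg (by linarith)]
  · have hc1 : c = 1 := by nlinarith
    have hab : a = b := by nlinarith
    subst hc1 hab
    nlinarith

theorem rpow_mul_le_csConst {k ω a b : ℝ} (hk : 0 < k) (hω : |ω| ≤ 1) (ha : 0 ≤ a) (ha1 : a ≤ 1)
    (hb : 0 ≤ b) (hgram : a ^ 2 + b ^ 2 - 2 * a * b * |ω| ≤ 1 - ω ^ 2) :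
    a ^ k * b ≤ csConst k ω := by
  set c := csRoot k ω
  have hc : 0 < c := csRoot_pos hk ω
  have hquad : k * a ^ 2 + (c * b) ^ 2 ≤ k + |ω| * c := by
    rw [mul_pow]
    exact weighted_sq_add_le_of_gram hk (abs_nonneg ω) hω hc (csRoot_sq_add_mul hk.le ω)
      (by nlinarith) (by rwa [sq_abs])
  calc a ^ k * b = a ^ k * (c * b) / c := by field_simp
    _ ≤ ((k * a ^ 2 + (c * b) ^ 2) / (k + 1)) ^ ((k + 1) / 2) / c := by
        gcongr
        exact rpow_mul_le_weighted_mean_sq hk ha (by positivity)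
    _ ≤ ((k + |ω| * c) / (k + 1)) ^ ((k + 1) / 2) / c := by gcongr
    _ = csConst k ω := by
        rw [csConst, div_rpow (by positivity) (by positivity), div_div, mul_comm c]

section InnerProductSpace

variable {E : Type*} [NormedAddCommGroup E] [InnerProductSpace ℝ E]

theorem gram_det_three_nonneg (u v x : E) :
    ‖u‖ ^ 2 * ⟪v, x⟫_ℝ ^ 2 + ‖v‖ ^ 2 * ⟪u, x⟫_ℝ ^ 2 + ‖x‖ ^ 2 * ⟪u, v⟫_ℝ ^ 2
      ≤ ‖u‖ ^ 2 * ‖v‖ ^ 2 * ‖x‖ ^ 2 + 2 * ⟪u, v⟫_ℝ * ⟪u, x⟫_ℝ * ⟪v, x⟫_ℝ := by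
  have h := (Matrix.posSemidef_gram ℝ ![u, v, x]).det_nonneg
  simp only [Matrix.det_fin_three, Matrix.gram_apply, Matrix.cons_val_zero, Matrix.cons_val_one,
    Matrix.cons_val, real_inner_self_eq_norm_sq, real_inner_comm] at h
  linarith

theorem abs_inner_rpow_mul_abs_inner_le_csConst {p q y : E} (hp : ‖p‖ = 1) (hq : ‖q‖ = 1)
    (hy : ‖y‖ = 1) {k : ℝ} (hk : 0 < k) :
    |⟪p, y⟫_ℝ| ^ k * |⟪q, y⟫_ℝ| ≤ csConst k ⟪p, q⟫_ℝ := by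
  have hunit : ∀ z w : E, ‖z‖ = 1 → ‖w‖ = 1 → |⟪z, w⟫_ℝ| ≤ 1 := fun z w hz hw ↦ by
    simpa [hz, hw] using abs_real_inner_le_norm z w
  refine rpow_mul_le_csConst hk (hunit p q hp hq) (abs_nonneg _) (hunit p y hp hy)
    (abs_nonneg _) ?_
  have hgram := gram_det_three_nonneg p q y
  rw [hp, hq, hy] at hgram
  have hsign := le_abs_self (⟪p, q⟫_ℝ * ⟪p, y⟫_ℝ * ⟪q, y⟫_ℝ)
  rw [abs_mul, abs_mul] at hsign
  simp only [sq_abs]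
  linarith

theorem real_inner_inv_norm_smul (u v : E) :
    ⟪‖u‖⁻¹ • u, ‖v‖⁻¹ • v⟫_ℝ = ⟪u, v⟫_ℝ / (‖u‖ * ‖v‖) := by
  rw [real_inner_smul_left, real_inner_smul_right]
  field_simp

end InnerProductSpace

/-- Improved Cauchy–Schwarz product bound: for nonzero `u, v ∈ ℝ^d`, any `x`,
`ω = u·v/(‖u‖‖v‖)` and `k > 0`,
`|u·x|^k |v·x| ≤ D_k(ω) ‖u‖^k ‖v‖ ‖x‖^{k+1}` where
`c_k(ω) = √(k + ((k−1)²/4)ω²) − ((k−1)/2)|ω|` and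
`D_k(ω) = (k + |ω|c_k(ω))^{(k+1)/2} / (c_k(ω)(k+1)^{(k+1)/2})`. -/
theorem stmt_8 (d : ℕ) (u v x : EuclideanSpace ℝ (Fin d))
    (hu : u ≠ 0) (hv : v ≠ 0) (k : ℝ) (hk : 0 < k) :
    |(inner ℝ u x : ℝ)| ^ k * |(inner ℝ v x : ℝ)| ≤
      (let ω := (inner ℝ u v : ℝ) / (‖u‖ * ‖v‖)
       let ck := Real.sqrt (k + (k - 1) ^ 2 / 4 * ω ^ 2) - (k - 1) / 2 * |ω|
       (k + |ω| * ck) ^ ((k + 1) / 2) / (ck * (k + 1) ^ ((k + 1) / 2)))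
        * ‖u‖ ^ k * ‖v‖ * ‖x‖ ^ (k + 1) := by
  rcases eq_or_ne x 0 with rfl | hx
  · simp [zero_rpow hk.ne', zero_rpow (by positivity : k + 1 ≠ 0)]
  have hunit := abs_inner_rpow_mul_abs_inner_le_csConst (norm_smul_inv_norm (𝕜 := ℝ) hu)
    (norm_smul_inv_norm (𝕜 := ℝ) hv) (norm_smul_inv_norm (𝕜 := ℝ) hx) hk
  simp only [RCLike.ofReal_real_eq_id, id, real_inner_inv_norm_smul] at hunit
  change _ ≤ csConst k (⟪u, v⟫_ℝ / (‖u‖ * ‖v‖)) * _ * _ * _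
  have hU := norm_pos_iff.2 hu
  have hV := norm_pos_iff.2 hv
  have hX := norm_pos_iff.2 hx
  calc |⟪u, x⟫_ℝ| ^ k * |⟪v, x⟫_ℝ|
      = |⟪u, x⟫_ℝ / (‖u‖ * ‖x‖)| ^ k * |⟪v, x⟫_ℝ / (‖v‖ * ‖x‖)|
          * (‖u‖ ^ k * ‖v‖ * ‖x‖ ^ (k + 1)) := by
        rw [abs_div, abs_div, abs_of_pos (mul_pos hU hX), abs_of_pos (mul_pos hV hX),
          div_rpow (abs_nonneg _) (by positivity), mul_rpow hU.le hX.le, rpow_add_one hX.ne']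
        field_simp
    _ ≤ csConst k (⟪u, v⟫_ℝ / (‖u‖ * ‖v‖)) * (‖u‖ ^ k * ‖v‖ * ‖x‖ ^ (k + 1)) := by gcongr
    _ = _ := by ring
end

section
/- For u, v, x ∈ ℝ^d with u, v nonzero and ω = (u·v)/(‖u‖‖v‖), we have |u·x| |v·x| ≤ ((1+|ω|)/2) ‖u‖ ‖v‖ ‖x‖². -/
/-!
Normalize `u, v` to unit vectors `a, b`. By polarization
`4⟪a, x⟫⟪b, x⟫ = ⟪a + b, x⟫² - ⟪a - b, x⟫² ≤ ‖a + b‖²‖x‖² = 2(1 + ⟪a, b⟫)‖x‖²`,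
and replacing `b` by `-b` bounds `-⟪a, x⟫⟪b, x⟫` by `(1 - ⟪a, b⟫)/2 ‖x‖²`.
-/

open RealInnerProductSpace

variable {E : Type*} [NormedAddCommGroup E] [InnerProductSpace ℝ E]

theorem four_mul_inner_mul_inner_le_norm_add_sq_mul (a b x : E) :
    4 * (⟪a, x⟫ * ⟪b, x⟫) ≤ ‖a + b‖ ^ 2 * ‖x‖ ^ 2 := by
  have polarization : 4 * (⟪a, x⟫ * ⟪b, x⟫) = ⟪a + b, x⟫ ^ 2 - ⟪a - b, x⟫ ^ 2 := by
    simp only [inner_add_left, inner_sub_left]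
    ring
  have cauchy_schwarz : ⟪a + b, x⟫ ^ 2 ≤ (‖a + b‖ * ‖x‖) ^ 2 := by
    rw [← sq_abs]
    exact pow_le_pow_left₀ (abs_nonneg _) (abs_real_inner_le_norm _ _) 2
  nlinarith [sq_nonneg ⟪a - b, x⟫]

theorem abs_inner_mul_abs_inner_le_of_norm_eq_one {a b : E} (ha : ‖a‖ = 1) (hb : ‖b‖ = 1)
    (x : E) : |⟪a, x⟫| * |⟪b, x⟫| ≤ (1 + |⟪a, b⟫|) / 2 * ‖x‖ ^ 2 := by
  have hadd : ‖a + b‖ ^ 2 = 2 * (1 + ⟪a, b⟫) := by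
    rw [norm_add_sq_real, ha, hb]; ring
  have hsub : ‖a + -b‖ ^ 2 = 2 * (1 - ⟪a, b⟫) := by
    rw [← sub_eq_add_neg, norm_sub_sq_real, ha, hb]; ring
  have upper := four_mul_inner_mul_inner_le_norm_add_sq_mul a b x
  have lower := four_mul_inner_mul_inner_le_norm_add_sq_mul a (-b) x
  rw [hadd] at upper
  rw [hsub, inner_neg_left] at lower
  rw [← abs_mul, abs_le]
  constructor <;> nlinarith [le_abs_self ⟪a, b⟫, neg_abs_le ⟪a, b⟫, sq_nonneg ‖x‖]

theorem abs_inner_mul_abs_inner_le {u v : E} (hu : u ≠ 0) (hv : v ≠ 0) (x : E) :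
    |⟪u, x⟫| * |⟪v, x⟫| ≤ (1 + |⟪u, v⟫ / (‖u‖ * ‖v‖)|) / 2 * ‖u‖ * ‖v‖ * ‖x‖ ^ 2 := by
  have hu' : 0 < ‖u‖ := norm_pos_iff.mpr hu
  have hv' : 0 < ‖v‖ := norm_pos_iff.mpr hv
  have key := abs_inner_mul_abs_inner_le_of_norm_eq_one (norm_smul_inv_norm (𝕜 := ℝ) hu)
    (norm_smul_inv_norm (𝕜 := ℝ) hv) x
  simp only [real_inner_smul_left, real_inner_smul_right, RCLike.ofReal_real_eq_id, id_eq,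
    abs_mul, abs_inv, abs_norm] at key
  calc |⟪u, x⟫| * |⟪v, x⟫| = ‖u‖ * ‖v‖ * (‖u‖⁻¹ * |⟪u, x⟫| * (‖v‖⁻¹ * |⟪v, x⟫|)) := by
        field_simp
    _ ≤ ‖u‖ * ‖v‖ * ((1 + ‖v‖⁻¹ * (‖u‖⁻¹ * |⟪u, v⟫|)) / 2 * ‖x‖ ^ 2) := by gcongr
    _ = _ := by
        rw [abs_div, abs_of_pos (mul_pos hu' hv')]
        field_simp

/-- `k = 1` case of the improved Cauchy–Schwarz product bound: for nonzero
`u, v ∈ ℝ^d` and any `x`, with `ω = u·v/(‖u‖‖v‖)`,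
`|u·x||v·x| ≤ ((1+|ω|)/2)‖u‖‖v‖‖x‖²`. -/
theorem stmt_9 (d : ℕ) (u v x : EuclideanSpace ℝ (Fin d))
    (hu : u ≠ 0) (hv : v ≠ 0) :
    |(inner ℝ u x : ℝ)| * |(inner ℝ v x : ℝ)| ≤
      (1 + |(inner ℝ u v : ℝ) / (‖u‖ * ‖v‖)|) / 2 * ‖u‖ * ‖v‖ * ‖x‖ ^ 2 :=
  abs_inner_mul_abs_inner_le hu hv x
end

section
/- Let ℓ: ℝ^d → ℝ be twice continuously differentiable with gradient g and Hessian H. Suppose that for some x ∈ ℝ^d and M ≥ 0, |uᵀH(θ₁)v| ≤ |xᵀu| |xᵀv| M for all θ₁ in the triangle with vertices θ, θ', θ̂ and all u, v ∈ ℝ^d. Then |ℓ(θ') − ℓ(θ) − (θ'−θ)ᵀ g(θ̂)| ≤ |xᵀ(θ'−θ)| · max(|xᵀ(θ−θ̂)|, |xᵀ(θ'−θ̂)|) · M. -/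
/-! Apply the mean value theorem along `[θ, θ']` to `ℓ - Dℓ(θ̂)`. Its derivative in the direction
`θ' - θ` at `z` is `Dℓ(z)(θ' - θ) - Dℓ(θ̂)(θ' - θ)`, which a second mean value argument along
`[θ̂, z]` (inside the triangle) bounds by `|xᵀ(z - θ̂)| |xᵀ(θ' - θ)| M`; finally `z ↦ |xᵀ(z - θ̂)|`
is convex, so on `[θ, θ']` it is at most its value at one of the endpoints. -/

open Set AffineMap

section MeanValue

variable {E F : Type*} [NormedAddCommGroup E] [NormedSpace ℝ E]
  [NormedAddCommGroup F] [NormedSpace ℝ F]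

theorem norm_sub_le_of_norm_hasFDerivAt_apply_le {f : E → F} {f' : E → E →L[ℝ] F} {a b : E}
    {C : ℝ} (hf : ∀ z ∈ segment ℝ a b, HasFDerivAt f (f' z) z)
    (hC : ∀ z ∈ segment ℝ a b, ‖f' z (b - a)‖ ≤ C) : ‖f b - f a‖ ≤ C := by
  have hmem : ∀ t ∈ Icc (0 : ℝ) 1, lineMap a b t ∈ segment ℝ a b := fun t ht =>
    segment_eq_image_lineMap ℝ a b ▸ mem_image_of_mem _ ht
  simpa using norm_image_sub_le_of_norm_deriv_le_segment_01' (f := f ∘ lineMap a b)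
    (fun t ht => ((hf _ (hmem t ht)).comp_hasDerivAt t hasDerivAt_lineMap).hasDerivWithinAt)
    (fun t ht => hC _ (hmem t (Ico_subset_Icc_self ht)))

theorem abs_fderiv_apply_sub_le {ℓ : E → ℝ} (hℓ : Differentiable ℝ (fderiv ℝ ℓ))
    (φ : E →ₗ[ℝ] ℝ) {M : ℝ} {a b : E}
    (hH : ∀ z ∈ segment ℝ a b, ∀ u v, |fderiv ℝ (fderiv ℝ ℓ) z u v| ≤ |φ u| * |φ v| * M)
    (v : E) : |fderiv ℝ ℓ b v - fderiv ℝ ℓ a v| ≤ |φ (b - a)| * |φ v| * M :=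
  norm_sub_le_of_norm_hasFDerivAt_apply_le (f := fun z => fderiv ℝ ℓ z v)
    (fun z _ => (hℓ z).hasFDerivAt.clm_apply (hasFDerivAt_const v z))
    (fun z hz => by simpa using hH z hz (b - a) v)

end MeanValue

theorem abs_apply_sub_le_max_of_mem_segment {E : Type*} [AddCommGroup E] [Module ℝ E]
    (φ : E →ₗ[ℝ] ℝ) {x y z : E} (c : E) (hz : z ∈ segment ℝ x y) :
    |φ (z - c)| ≤ max |φ (x - c)| |φ (y - c)| := by
  have hzc : z - c ∈ segment ℝ (x - c) (y - c) := by
    simpa [neg_add_eq_sub] using (mem_segment_translate ℝ (-c)).mpr hz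
  exact (convexOn_univ_norm.comp_linearMap φ).le_max_of_mem_segment (mem_univ _) (mem_univ _) hzc

theorem abs_sub_sub_fderiv_le_of_abs_fderiv_fderiv_le {E : Type*} [NormedAddCommGroup E]
    [NormedSpace ℝ E] {ℓ : E → ℝ} (hℓ : Differentiable ℝ ℓ)
    (hℓ' : Differentiable ℝ (fderiv ℝ ℓ)) (φ : E →ₗ[ℝ] ℝ) {M : ℝ} (hM : 0 ≤ M) {a b c : E}
    (hH : ∀ z ∈ convexHull ℝ {a, b, c}, ∀ u v,
      |fderiv ℝ (fderiv ℝ ℓ) z u v| ≤ |φ u| * |φ v| * M) :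
    |ℓ b - ℓ a - fderiv ℝ ℓ c (b - a)| ≤ |φ (b - a)| * max |φ (a - c)| |φ (b - c)| * M := by
  have hseg : ∀ z ∈ segment ℝ a b, segment ℝ c z ⊆ convexHull ℝ {a, b, c} := fun z hz =>
    (convex_convexHull ℝ _).segment_subset (subset_convexHull ℝ _ (by simp))
      (segment_subset_convexHull (by simp) (by simp) hz)
  have hderiv : ∀ z ∈ segment ℝ a b,
      ‖(fderiv ℝ ℓ z - fderiv ℝ ℓ c) (b - a)‖ ≤ |φ (b - a)| * max |φ (a - c)| |φ (b - c)| * M :=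
    fun z hz => calc
      ‖(fderiv ℝ ℓ z - fderiv ℝ ℓ c) (b - a)‖
          = |fderiv ℝ ℓ z (b - a) - fderiv ℝ ℓ c (b - a)| := rfl
      _ ≤ |φ (z - c)| * |φ (b - a)| * M :=
          abs_fderiv_apply_sub_le hℓ' φ (fun w hw => hH w (hseg z hz hw)) _
      _ ≤ max |φ (a - c)| |φ (b - c)| * |φ (b - a)| * M := by
          gcongr
          exact abs_apply_sub_le_max_of_mem_segment φ c hz
      _ = |φ (b - a)| * max |φ (a - c)| |φ (b - c)| * M := by ring
  calc |ℓ b - ℓ a - fderiv ℝ ℓ c (b - a)|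
      = ‖(ℓ - fderiv ℝ ℓ c) b - (ℓ - fderiv ℝ ℓ c) a‖ := by
        rw [Real.norm_eq_abs, Pi.sub_apply, Pi.sub_apply, map_sub]
        ring_nf
    _ ≤ _ := norm_sub_le_of_norm_hasFDerivAt_apply_le
        (fun z _ => (hℓ z).hasFDerivAt.sub (fderiv ℝ ℓ c).hasFDerivAt) hderiv

/-- First-order control-variate error bound with inner-product Hessian bound:
if `|uᵀH(θ₁)v| ≤ |xᵀu||xᵀv|M` on the triangle with vertices `θ, θ', θ̂`, then
`|ℓ(θ') − ℓ(θ) − (θ'−θ)ᵀg(θ̂)| ≤ |xᵀ(θ'−θ)| max(|xᵀ(θ−θ̂)|, |xᵀ(θ'−θ̂)|) M`. -/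
theorem stmt_10 (d : ℕ) (ℓ : EuclideanSpace ℝ (Fin d) → ℝ)
    (hℓ : ContDiff ℝ 2 ℓ)
    (θ θ' θh x : EuclideanSpace ℝ (Fin d)) (M : ℝ) (hM : 0 ≤ M)
    (hH : ∀ θ₁ ∈ convexHull ℝ ({θ, θ', θh} : Set (EuclideanSpace ℝ (Fin d))),
      ∀ u v : EuclideanSpace ℝ (Fin d),
        |fderiv ℝ (fun z => fderiv ℝ ℓ z) θ₁ u v| ≤
          |(inner ℝ x u : ℝ)| * |(inner ℝ x v : ℝ)| * M) :
    |ℓ θ' - ℓ θ - (inner ℝ (θ' - θ) (gradient ℓ θh) : ℝ)| ≤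
      |(inner ℝ x (θ' - θ) : ℝ)| *
        max |(inner ℝ x (θ - θh) : ℝ)| |(inner ℝ x (θ' - θh) : ℝ)| * M := by
  rw [real_inner_comm, inner_gradient_left]
  exact abs_sub_sub_fderiv_le_of_abs_fderiv_fderiv_le (hℓ.differentiable (by norm_num))
    ((hℓ.fderiv_right (m := 1) (by norm_num)).differentiable one_ne_zero) (innerₛₗ ℝ x) hM hH
end

section
/- Let ℓ: ℝ^d → ℝ be thrice differentiable with gradient g and Hessian H, and suppose there is L ≥ 0 such that |uᵀ{H(θ₂)−H(θ₁)}v| ≤ ‖u‖‖v‖‖θ₂−θ₁‖L for all θ₁, θ₂ in the convex hull of {θ, θ', θ̂}. Then with r^(2)(θ,θ';θ̂) = (θ'−θ)ᵀg(θ̂) + (θ'−θ)ᵀH(θ̂)((θ'+θ)/2 − θ̂), we have |ℓ(θ') − ℓ(θ) − r^(2)(θ,θ';θ̂)| ≤ (L/12)‖θ'−θ‖³ + (L/2)‖θ'−θ‖‖θ−θ̂‖² + (L/2)‖θ'−θ‖‖θ'−θ̂‖². -/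
/-!
Let `q` be the second-order Taylor polynomial of `ℓ` at `θ̂`. By symmetry of the Hessian,
`r⁽²⁾(θ, θ'; θ̂) = q θ' - q θ`, so the error is `R θ' - R θ` with `R = ℓ - q`, and
`DR(z) = Dℓ(z) - Dℓ(θ̂) - H(θ̂)(z - θ̂)`. Integrating the Lipschitz bound on `H` along `[θ̂, z]`
gives `‖DR(z)‖ ≤ (L/2)‖z - θ̂‖²`, which on the segment `[θ, θ']` is at most
`(L/2) max(‖θ - θ̂‖, ‖θ' - θ̂‖)²`; the mean value inequality on `[θ, θ']` concludes.
-/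

open Set

section

variable {E F : Type*} [NormedAddCommGroup E] [NormedSpace ℝ E]
  [NormedAddCommGroup F] [NormedSpace ℝ F]

theorem norm_sub_le_half_of_norm_deriv_le_mul {φ φ' : ℝ → F} {C : ℝ}
    (hφ : ∀ t ∈ Icc (0 : ℝ) 1, HasDerivWithinAt φ (φ' t) (Icc 0 1) t)
    (hbound : ∀ t ∈ Ico (0 : ℝ) 1, ‖φ' t‖ ≤ C * t) :
    ‖φ 1 - φ 0‖ ≤ C / 2 := by
  have hB : ∀ t : ℝ, HasDerivAt (fun t => C / 2 * t ^ 2) (C * t) t := fun t =>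
    ((hasDerivAt_pow 2 t).const_mul (C / 2)).congr_deriv (by norm_num; ring)
  have := image_norm_le_of_norm_deriv_right_le_deriv_boundary (f := fun t => φ t - φ 0)
    (fun t ht => ((hφ t ht).sub_const (φ 0)).continuousWithinAt)
    (fun t ht => ((hφ t (Ico_subset_Icc_self ht)).sub_const (φ 0)).mono_of_mem_nhdsWithin
      (Icc_mem_nhdsGE_of_mem ht))
    (by simp) hB hbound (right_mem_Icc.2 zero_le_one)
  simpa using this

theorem Convex.norm_image_sub_sub_hasFDerivWithin_le {f : E → F} {f' : E → E →L[ℝ] F}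
    {s : Set E} {x y : E} {L : ℝ} (hs : Convex ℝ s) (hf : ∀ z ∈ s, HasFDerivWithinAt f (f' z) s z)
    (hLip : ∀ z ∈ s, ‖f' z - f' x‖ ≤ L * ‖z - x‖) (hx : x ∈ s) (hy : y ∈ s) :
    ‖f y - f x - f' x (y - x)‖ ≤ L / 2 * ‖y - x‖ ^ 2 := by
  set c : ℝ → E := fun t => x + t • (y - x)
  have hc_mem : MapsTo c (Icc 0 1) s := fun t ht => hs.add_smul_sub_mem hx hy ht
  have hc : ∀ t, HasDerivWithinAt c (y - x) (Icc 0 1) t := fun t =>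
    (((hasDerivAt_id t).smul_const (y - x)).const_add x).hasDerivWithinAt.congr_deriv
      (one_smul ℝ _)
  have hφ : ∀ t ∈ Icc (0 : ℝ) 1, HasDerivWithinAt (fun t => f (c t) - t • f' x (y - x))
      ((f' (c t) - f' x) (y - x)) (Icc 0 1) t := fun t ht =>
    (((hf _ (hc_mem ht)).comp_hasDerivWithinAt t (hc t) hc_mem).sub
      (((hasDerivAt_id t).smul_const (f' x (y - x))).hasDerivWithinAt)).congr_deriv
      (by simp)
  have hbound : ∀ t ∈ Ico (0 : ℝ) 1, ‖(f' (c t) - f' x) (y - x)‖ ≤ L * ‖y - x‖ ^ 2 * t := by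
    intro t ht
    have hct : c t - x = t • (y - x) := add_sub_cancel_left _ _
    calc ‖(f' (c t) - f' x) (y - x)‖ ≤ ‖f' (c t) - f' x‖ * ‖y - x‖ :=
          ContinuousLinearMap.le_opNorm _ _
      _ ≤ L * ‖c t - x‖ * ‖y - x‖ := by
        gcongr; exact hLip _ (hc_mem (Ico_subset_Icc_self ht))
      _ = L * ‖y - x‖ ^ 2 * t := by
        rw [hct, norm_smul, Real.norm_of_nonneg ht.1]; ring
  have := norm_sub_le_half_of_norm_deriv_le_mul hφ hbound
  simpa only [c, one_smul, zero_smul, add_sub_cancel, add_zero, sub_zero, sub_right_comm,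
    mul_div_right_comm] using this

theorem ContinuousLinearMap.hasFDerivAt_half_quadratic {B : E →L[ℝ] E →L[ℝ] F}
    (hB : ∀ u v, B u v = B v u) (x₀ z : E) :
    HasFDerivAt (fun z => (2⁻¹ : ℝ) • B (z - x₀) (z - x₀)) (B (z - x₀)) z := by
  have hsub : HasFDerivAt (fun z => z - x₀) (ContinuousLinearMap.id ℝ E) z :=
    (hasFDerivAt_id z).sub_const x₀
  refine (((B.hasFDerivAt.comp z hsub).clm_apply hsub).const_smul (2⁻¹ : ℝ)).congr_fderiv ?_
  ext h
  simp only [smul_apply, add_apply, ContinuousLinearMap.comp_apply, ContinuousLinearMap.flip_apply,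
    ContinuousLinearMap.id_apply, Function.comp_apply, hB h]
  module

noncomputable def secondOrderControlVariate (f' : E →L[ℝ] F) (f'' : E →L[ℝ] E →L[ℝ] F)
    (x₀ x y : E) : F :=
  f' (y - x) + f'' (y - x) ((2 : ℝ)⁻¹ • (y + x) - x₀)

theorem Convex.norm_image_sub_sub_secondOrderControlVariate_le {f : E → F}
    {f' : E → E →L[ℝ] F} {f'' : E → E →L[ℝ] E →L[ℝ] F} {s : Set E} {x₀ x y : E} {L : ℝ}
    (hs : Convex ℝ s) (hf : ∀ z ∈ s, HasFDerivWithinAt f (f' z) s z)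
    (hf' : ∀ z ∈ s, HasFDerivWithinAt f' (f'' z) s z) (hsymm : ∀ u v, f'' x₀ u v = f'' x₀ v u)
    (hL : 0 ≤ L) (hLip : ∀ z ∈ s, ‖f'' z - f'' x₀‖ ≤ L * ‖z - x₀‖)
    (hx₀ : x₀ ∈ s) (hx : x ∈ s) (hy : y ∈ s) :
    ‖f y - f x - secondOrderControlVariate (f' x₀) (f'' x₀) x₀ x y‖ ≤
      L / 2 * max ‖x - x₀‖ ‖y - x₀‖ ^ 2 * ‖y - x‖ := by
  set R : E → F := fun z => f z - f' x₀ z - (2⁻¹ : ℝ) • f'' x₀ (z - x₀) (z - x₀)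
  have hR : ∀ z ∈ s, HasFDerivWithinAt R (f' z - f' x₀ - f'' x₀ (z - x₀)) s z := fun z hz =>
    ((hf z hz).sub (f' x₀).hasFDerivWithinAt).sub
      (ContinuousLinearMap.hasFDerivAt_half_quadratic hsymm x₀ z).hasFDerivWithinAt
  have hR_bound : ∀ z ∈ segment ℝ x y,
      ‖f' z - f' x₀ - f'' x₀ (z - x₀)‖ ≤ L / 2 * max ‖x - x₀‖ ‖y - x₀‖ ^ 2 := by
    intro z hz
    have hz_near : ‖z - x₀‖ ≤ max ‖x - x₀‖ ‖y - x₀‖ := by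
      simpa only [dist_eq_norm] using
        (convexOn_univ_dist x₀).le_max_of_mem_segment (mem_univ x) (mem_univ y) hz
    calc ‖f' z - f' x₀ - f'' x₀ (z - x₀)‖ ≤ L / 2 * ‖z - x₀‖ ^ 2 :=
          hs.norm_image_sub_sub_hasFDerivWithin_le hf' hLip hx₀ (hs.segment_subset hx hy hz)
      _ ≤ L / 2 * max ‖x - x₀‖ ‖y - x₀‖ ^ 2 := by gcongr
  have hseg := hs.segment_subset hx hy
  have hmvt := (convex_segment x y).norm_image_sub_le_of_norm_hasFDerivWithin_le
    (fun z hz => (hR z (hseg hz)).mono hseg) hR_bound (left_mem_segment ℝ x y)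
    (right_mem_segment ℝ x y)
  have hRdiff : R y - R x = f y - f x - secondOrderControlVariate (f' x₀) (f'' x₀) x₀ x y := by
    have hquad : f'' x₀ (y - x) ((2 : ℝ)⁻¹ • (y + x) - x₀) =
        (2 : ℝ)⁻¹ • (f'' x₀ (y - x₀) (y - x₀) - f'' x₀ (x - x₀) (x - x₀)) := by
      rw [show y - x = (y - x₀) - (x - x₀) by abel,
        show (2 : ℝ)⁻¹ • (y + x) - x₀ = (2 : ℝ)⁻¹ • ((y - x₀) + (x - x₀)) by module]
      generalize y - x₀ = b
      generalize x - x₀ = a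
      simp only [map_sub, map_add, map_smul, sub_apply, hsymm a b]
      module
    simp only [R, secondOrderControlVariate]
    rw [hquad, (f' x₀).map_sub]
    module
  rwa [hRdiff] at hmvt

end

/-- Second-order control-variate error bound: if the Hessian is `L`-Lipschitz
(in the bilinear/operator sense) on the convex hull of `{θ, θ', θ̂}`, then with
`r² = (θ'−θ)ᵀg(θ̂) + (θ'−θ)ᵀH(θ̂)((θ'+θ)/2 − θ̂)`,
`|ℓ(θ') − ℓ(θ) − r²| ≤ (L/12)‖θ'−θ‖³ + (L/2)‖θ'−θ‖‖θ−θ̂‖² + (L/2)‖θ'−θ‖‖θ'−θ̂‖²`. -/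
theorem stmt_12 (d : ℕ) (ℓ : EuclideanSpace ℝ (Fin d) → ℝ)
    (hℓ : ContDiff ℝ 3 ℓ)
    (θ θ' θh : EuclideanSpace ℝ (Fin d)) (L : ℝ) (hL : 0 ≤ L)
    (hLip : ∀ θ₁ ∈ convexHull ℝ ({θ, θ', θh} : Set (EuclideanSpace ℝ (Fin d))),
      ∀ θ₂ ∈ convexHull ℝ ({θ, θ', θh} : Set (EuclideanSpace ℝ (Fin d))),
      ∀ u v : EuclideanSpace ℝ (Fin d),
        |fderiv ℝ (fun z => fderiv ℝ ℓ z) θ₂ u v -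
            fderiv ℝ (fun z => fderiv ℝ ℓ z) θ₁ u v| ≤
          ‖u‖ * ‖v‖ * ‖θ₂ - θ₁‖ * L) :
    |ℓ θ' - ℓ θ - ((inner ℝ (θ' - θ) (gradient ℓ θh) : ℝ) +
        fderiv ℝ (fun z => fderiv ℝ ℓ z) θh (θ' - θ)
          ((2 : ℝ)⁻¹ • (θ' + θ) - θh))| ≤
      L / 12 * ‖θ' - θ‖ ^ 3 + L / 2 * ‖θ' - θ‖ * ‖θ - θh‖ ^ 2 +
        L / 2 * ‖θ' - θ‖ * ‖θ' - θh‖ ^ 2 := by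
  set S := convexHull ℝ ({θ, θ', θh} : Set (EuclideanSpace ℝ (Fin d)))
  set H := fderiv ℝ (fun z => fderiv ℝ ℓ z)
  have hθ : θ ∈ S := subset_convexHull ℝ _ (by simp)
  have hθ' : θ' ∈ S := subset_convexHull ℝ _ (by simp)
  have hθh : θh ∈ S := subset_convexHull ℝ _ (by simp)
  have hD : ContDiff ℝ 2 (fderiv ℝ ℓ) := hℓ.fderiv_right (by norm_num)
  have hHLip : ∀ z ∈ S, ‖H z - H θh‖ ≤ L * ‖z - θh‖ := fun z hz =>
    (H z - H θh).opNorm_le_bound₂ (by positivity) fun u v => by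
      rw [Real.norm_eq_abs]
      exact (hLip θh hθh z hz u v).trans_eq (by ring)
  have h := (convex_convexHull ℝ _).norm_image_sub_sub_secondOrderControlVariate_le
    (fun z _ => (hℓ.differentiable (by norm_num) z).hasFDerivAt.hasFDerivWithinAt)
    (fun z _ => (hD.differentiable (by norm_num) z).hasFDerivAt.hasFDerivWithinAt)
    (hℓ.contDiffAt.isSymmSndFDerivAt (by simp; decide)).eq hL hHLip hθh hθ hθ'
  have hmax : max ‖θ - θh‖ ‖θ' - θh‖ ^ 2 ≤ ‖θ - θh‖ ^ 2 + ‖θ' - θh‖ ^ 2 := by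
    rcases le_total ‖θ - θh‖ ‖θ' - θh‖ with hle | hle
    · simp [max_eq_right hle]
    · simp [max_eq_left hle]
  rw [real_inner_comm, inner_gradient_left, ← Real.norm_eq_abs]
  calc _ ≤ L / 2 * max ‖θ - θh‖ ‖θ' - θh‖ ^ 2 * ‖θ' - θ‖ := h
    _ ≤ L / 2 * (‖θ - θh‖ ^ 2 + ‖θ' - θh‖ ^ 2) * ‖θ' - θ‖ := by gcongr
    _ ≤ _ := by linarith [show 0 ≤ L / 12 * ‖θ' - θ‖ ^ 3 by positivity]
end

section
/- Define T(η) = φ(η)(φ(η) + ηΦ(η))/Φ(η)², where φ and Φ are the standard normal pdf and cdf. Then T is strictly decreasing on ℝ, with lim_{η→−∞} T(η) = 1 and lim_{η→∞} T(η) = 0; consequently 0 ≤ T(η) ≤ 1 for all η. -/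
/-!
Write `g = φ / Φ`, so that `T = g (g + η)`. Since `g' = -g (g + η)`, one gets
`T' = -g ((g + η) (2g + η) - 1)`. Thus `T < 1` holds as soon as `g` lies below
`(√(η² + 4) - η) / 2`, the positive root of `x (x + η) = 1`, and `T' < 0` as soon as `g` lies above
`(√(η² + 8) - 3η) / 4`, the larger root of `(x + η) (2x + η) = 1`. These are Birnbaum's and
Sampford's bounds on the Mills ratio. Each is proved by showing that `2Φ - φ (η + √(η² + 4))`,
resp. `4φ - Φ (√(η² + 8) - 3η)`, is strictly increasing and tends to `0` at `-∞`; the derivative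
of the second is positive thanks to the first bound. Sampford's bound also gives `T > 0`, and it
squeezes `T` between `1 - 1 / (η² + 2)` and `1` on `η ≤ 0`.
-/

open Real MeasureTheory ProbabilityTheory Filter Set Topology

noncomputable def phi (t : ℝ) : ℝ := (√(2 * π))⁻¹ * exp (-t ^ 2 / 2)

noncomputable def Phi (η : ℝ) : ℝ := ∫ t in Iic η, phi t

lemma phi_eq_gaussianPDFReal : phi = gaussianPDFReal 0 1 := by
  ext t
  simp [phi, gaussianPDFReal]

lemma phi_pos (t : ℝ) : 0 < phi t := by
  rw [phi_eq_gaussianPDFReal]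
  exact gaussianPDFReal_pos _ _ _ one_ne_zero

lemma integrable_phi : Integrable phi := by
  rw [phi_eq_gaussianPDFReal]
  exact integrable_gaussianPDFReal _ _

lemma hasDerivAt_phi (t : ℝ) : HasDerivAt phi (-t * phi t) t := by
  have h : HasDerivAt (fun x : ℝ => -x ^ 2 / 2) (-t) t := by
    simpa [neg_div] using (hasDerivAt_pow 2 t).fun_neg.div_const 2
  exact (h.exp.const_mul _).congr_deriv (by rw [phi]; ring)

lemma Phi_eq_cdf (η : ℝ) : Phi η = cdf (gaussianReal 0 1) η := by
  rw [cdf_eq_real, measureReal_def, gaussianReal_apply_eq_integral _ one_ne_zero,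
    ENNReal.toReal_ofReal (setIntegral_nonneg measurableSet_Iic
      fun t _ => gaussianPDFReal_nonneg 0 1 t), Phi, phi_eq_gaussianPDFReal]

lemma tendsto_Phi_atBot : Tendsto Phi atBot (𝓝 0) := by
  simpa only [funext Phi_eq_cdf] using tendsto_cdf_atBot _

lemma tendsto_Phi_atTop : Tendsto Phi atTop (𝓝 1) := by
  simpa only [funext Phi_eq_cdf] using tendsto_cdf_atTop _

lemma Phi_pos (η : ℝ) : 0 < Phi η := by
  rw [Phi, setIntegral_pos_iff_support_of_nonneg_ae (ae_of_all _ fun t => (phi_pos t).le)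
    integrable_phi.integrableOn, Function.support_eq_univ fun t => (phi_pos t).ne', univ_inter]
  simp

lemma hasDerivAt_Phi (η : ℝ) : HasDerivAt Phi (phi η) η := by
  have hcont : Continuous phi := by unfold phi; fun_prop
  have h : Phi = fun x => Phi 0 + ∫ t in (0 : ℝ)..x, phi t := by
    ext x
    rw [← sub_eq_iff_eq_add', Phi, Phi,
      intervalIntegral.integral_Iic_sub_Iic integrable_phi.integrableOn integrable_phi.integrableOn]
  rw [h]
  exact (intervalIntegral.integral_hasDerivAt_right integrable_phi.intervalIntegrable
    hcont.stronglyMeasurable.stronglyMeasurableAtFilter hcont.continuousAt).const_add _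

lemma tendsto_abs_pow_mul_phi_cocompact (n : ℕ) :
    Tendsto (fun t => |t| ^ n * phi t) (cocompact ℝ) (𝓝 0) := by
  have := (tendsto_rpow_abs_mul_exp_neg_mul_sq_cocompact (a := 1 / 2) one_half_pos n).const_mul
    (√(2 * π))⁻¹
  rw [mul_zero] at this
  refine this.congr fun t => ?_
  simp only [phi, rpow_natCast]
  ring_nf

-- On `Iic x`, the tangent-line bound `-t²/2 ≤ x²/2 - x t` dominates `φ` by an exponential
-- whose integral is `φ x / (-x)`.
lemma neg_mul_Phi_le_phi {x : ℝ} (hx : x < 0) : -x * Phi x ≤ phi x := by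
  have hbound : ∀ t ∈ Iic x, phi t ≤ (√(2 * π))⁻¹ * exp (x ^ 2 / 2) * exp (-x * t) := by
    intro t _
    rw [mul_assoc, ← exp_add]
    exact mul_le_mul_of_nonneg_left (exp_le_exp.2 (by nlinarith [sq_nonneg (t - x)]))
      (by positivity)
  have hint := integral_exp_mul_Iic (neg_pos.2 hx) x
  calc -x * Phi x ≤ -x * ∫ t in Iic x, (√(2 * π))⁻¹ * exp (x ^ 2 / 2) * exp (-x * t) :=
        mul_le_mul_of_nonneg_left (setIntegral_mono_on integrable_phi.integrableOn
          ((integrableOn_exp_mul_Iic (neg_pos.2 hx) x).const_mul _) measurableSet_Iic hbound)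
          (neg_nonneg.2 hx.le)
    _ = phi x := by
        have := hx.ne
        rw [integral_const_mul, hint, phi]
        field_simp
        rw [← exp_add]
        ring_nf

lemma tendsto_phi_atBot : Tendsto phi atBot (𝓝 0) := by
  simpa using (tendsto_abs_pow_mul_phi_cocompact 0).mono_left atBot_le_cocompact

lemma tendsto_phi_atTop : Tendsto phi atTop (𝓝 0) := by
  simpa using (tendsto_abs_pow_mul_phi_cocompact 0).mono_left atTop_le_cocompact

lemma tendsto_mul_phi_atTop : Tendsto (fun t => t * phi t) atTop (𝓝 0) := by
  refine ((tendsto_abs_pow_mul_phi_cocompact 1).mono_left atTop_le_cocompact).congr' ?_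
  filter_upwards [eventually_ge_atTop 0] with t ht
  rw [pow_one, abs_of_nonneg ht]

lemma tendsto_mul_Phi_atBot : Tendsto (fun x => x * Phi x) atBot (𝓝 0) := by
  refine tendsto_of_tendsto_of_tendsto_of_le_of_le' (by simpa using tendsto_phi_atBot.neg)
    tendsto_const_nhds ?_ ?_
  · filter_upwards [eventually_lt_atBot 0] with x hx
    have := neg_mul_Phi_le_phi hx
    linarith
  · filter_upwards [eventually_le_atBot 0] with x hx
    exact mul_nonpos_of_nonpos_of_nonneg hx (Phi_pos x).le

lemma StrictMono.lt_of_tendsto {α β : Type*} [LinearOrder α] [NoMinOrder α] [TopologicalSpace β]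
    [Preorder β] [OrderClosedTopology β] {f : α → β} {a : β} (hf : StrictMono f)
    (ha : Tendsto f atBot (𝓝 a)) (x : α) : a < f x :=
  let ⟨y, hy⟩ := exists_lt x
  (hf.monotone.le_of_tendsto ha y).trans_lt (hf hy)

lemma hasDerivAt_sqrt_sq_add {c : ℝ} (hc : 0 < c) (x : ℝ) :
    HasDerivAt (fun t => √(t ^ 2 + c)) (x / √(x ^ 2 + c)) x := by
  have h := ((hasDerivAt_pow 2 x).add_const c).sqrt (by positivity)
  exact h.congr_deriv (by field_simp; push_cast; ring)

lemma abs_lt_sqrt_sq_add {c : ℝ} (hc : 0 < c) (x : ℝ) : |x| < √(x ^ 2 + c) :=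
  lt_sqrt_of_sq_lt (by rw [sq_abs]; linarith)

lemma neg_lt_sqrt_sq_add_four_mul (x : ℝ) : -(x * (x ^ 2 + 3)) < √(x ^ 2 + 4) * (1 + x ^ 2) := by
  have hsq : (x * (x ^ 2 + 3)) ^ 2 + 4 = (√(x ^ 2 + 4) * (1 + x ^ 2)) ^ 2 := by
    linear_combination -(1 + x ^ 2) ^ 2 * sq_sqrt (show 0 ≤ x ^ 2 + 4 by positivity)
  exact neg_lt.1 (abs_lt_of_sq_lt_sq' (a := x * (x ^ 2 + 3)) (b := √(x ^ 2 + 4) * (1 + x ^ 2))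
    (by linarith) (by positivity)).1

lemma phi_mul_add_sqrt_lt_two_mul_Phi (η : ℝ) : phi η * (η + √(η ^ 2 + 4)) < 2 * Phi η := by
  set F : ℝ → ℝ := fun x => 2 * Phi x - phi x * (x + √(x ^ 2 + 4))
  have hF (x : ℝ) : HasDerivAt F
      (phi x * (√(x ^ 2 + 4) * (1 + x ^ 2) + x * (x ^ 2 + 3)) / √(x ^ 2 + 4)) x := by
    have ha : 0 < √(x ^ 2 + 4) := sqrt_pos.2 (by positivity)
    have ha2 : √(x ^ 2 + 4) ^ 2 = x ^ 2 + 4 := sq_sqrt (by positivity)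
    refine (((hasDerivAt_Phi x).const_mul 2).sub ((hasDerivAt_phi x).mul
      ((hasDerivAt_id' x).fun_add (hasDerivAt_sqrt_sq_add (by norm_num) x)))).congr_deriv ?_
    field_simp
    linear_combination x * phi x * ha2
  have hF' (x : ℝ) : 0 < phi x * (√(x ^ 2 + 4) * (1 + x ^ 2) + x * (x ^ 2 + 3)) / √(x ^ 2 + 4) :=
    div_pos (mul_pos (phi_pos x) (by linarith [neg_lt_sqrt_sq_add_four_mul x]))
      (sqrt_pos.2 (by positivity))
  have hlim : Tendsto F atBot (𝓝 0) := by
    have h : Tendsto (fun x => phi x * (x + √(x ^ 2 + 4))) atBot (𝓝 0) := by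
      refine squeeze_zero' (Eventually.of_forall fun x => ?_) ?_
        (by simpa using tendsto_phi_atBot.const_mul 2)
      · exact mul_nonneg (phi_pos x).le
          (by linarith [neg_abs_le x, abs_lt_sqrt_sq_add (c := 4) (by norm_num) x])
      · filter_upwards [eventually_le_atBot 0] with x hx
        have : √(x ^ 2 + 4) ≤ 2 - x := sqrt_le_iff.2 ⟨by linarith, by nlinarith⟩
        nlinarith [phi_pos x]
    simpa using (tendsto_Phi_atBot.const_mul 2).sub h
  simpa [F] using (strictMono_of_hasDerivAt_pos hF hF').lt_of_tendsto hlim η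

lemma two_mul_sqrt_mul_add_lt (x : ℝ) :
    2 * √(x ^ 2 + 8) * (√(x ^ 2 + 8) + x) < (x + √(x ^ 2 + 4)) * (3 * √(x ^ 2 + 8) - x) := by
  obtain ⟨hax, hxa⟩ := abs_lt.1 (abs_lt_sqrt_sq_add (c := 4) (by norm_num) x)
  obtain ⟨hbx, hxb⟩ := abs_lt.1 (abs_lt_sqrt_sq_add (c := 8) (by norm_num) x)
  have ha2 : √(x ^ 2 + 4) ^ 2 = x ^ 2 + 4 := sq_sqrt (by positivity)
  have hb2 : √(x ^ 2 + 8) ^ 2 = x ^ 2 + 8 := sq_sqrt (by positivity)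
  set a := √(x ^ 2 + 4)
  set b := √(x ^ 2 + 8)
  have h1 : 0 < x ^ 2 + a * x + 2 := by
    have : (x ^ 2 + a * x + 2) * (a - x) = 2 * (a + x) := by linear_combination x * ha2
    nlinarith
  have h2 : b < 2 * a + x := by nlinarith
  have : ((x + a) * (3 * b - x) - 2 * b * (b + x)) * (a + b) = 4 * (2 * a + x - b) := by
    linear_combination (3 * b - x) * ha2 + (3 * a + x - 2 * a - 2 * b) * hb2
  nlinarith

lemma Phi_mul_sqrt_sub_lt_four_mul_phi (η : ℝ) : Phi η * (√(η ^ 2 + 8) - 3 * η) < 4 * phi η := by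
  set G : ℝ → ℝ := fun x => 4 * phi x - Phi x * (√(x ^ 2 + 8) - 3 * x)
  have hG (x : ℝ) : HasDerivAt G
      ((Phi x * (3 * √(x ^ 2 + 8) - x) - phi x * √(x ^ 2 + 8) * (√(x ^ 2 + 8) + x))
        / √(x ^ 2 + 8)) x := by
    have hb : 0 < √(x ^ 2 + 8) := sqrt_pos.2 (by positivity)
    refine (((hasDerivAt_phi x).const_mul 4).sub ((hasDerivAt_Phi x).mul
      ((hasDerivAt_sqrt_sq_add (by norm_num) x).fun_sub
        ((hasDerivAt_id' x).const_mul 3)))).congr_deriv ?_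
    field_simp
    ring
  have hG' (x : ℝ) : 0 < (Phi x * (3 * √(x ^ 2 + 8) - x)
      - phi x * √(x ^ 2 + 8) * (√(x ^ 2 + 8) + x)) / √(x ^ 2 + 8) := by
    have hA := phi_mul_add_sqrt_lt_two_mul_Phi x
    have hkey := two_mul_sqrt_mul_add_lt x
    obtain ⟨hbx, hxb⟩ := abs_lt.1 (abs_lt_sqrt_sq_add (c := 8) (by norm_num) x)
    refine div_pos ?_ (by linarith)
    nlinarith [mul_lt_mul_of_pos_right hA (show 0 < 3 * √(x ^ 2 + 8) - x by linarith),
      mul_lt_mul_of_pos_left hkey (phi_pos x)]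
  have hlim : Tendsto G atBot (𝓝 0) := by
    have h : Tendsto (fun x => Phi x * (√(x ^ 2 + 8) - 3 * x)) atBot (𝓝 0) := by
      have hbound : Tendsto (fun x => 3 * Phi x - 4 * (x * Phi x)) atBot (𝓝 0) := by
        simpa using (tendsto_Phi_atBot.const_mul 3).sub (tendsto_mul_Phi_atBot.const_mul 4)
      refine squeeze_zero' ?_ ?_ hbound
      · filter_upwards [eventually_le_atBot 0] with x hx
        exact mul_nonneg (Phi_pos x).le
          (by linarith [abs_lt_sqrt_sq_add (c := 8) (by norm_num) x, neg_abs_le x])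
      · filter_upwards [eventually_le_atBot 0] with x hx
        have : √(x ^ 2 + 8) ≤ 3 - x := sqrt_le_iff.2 ⟨by linarith, by nlinarith⟩
        nlinarith [Phi_pos x]
    simpa using (tendsto_phi_atBot.const_mul 4).sub h
  simpa [G] using (strictMono_of_hasDerivAt_pos hG hG').lt_of_tendsto hlim η

lemma phi_mul_phi_add_mul_Phi_lt_sq (η : ℝ) : phi η * (phi η + η * Phi η) < Phi η ^ 2 := by
  have hA := phi_mul_add_sqrt_lt_two_mul_Phi η
  obtain ⟨h1, h2⟩ := abs_lt.1 (abs_lt_sqrt_sq_add (c := 4) (by norm_num) η)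
  have ha2 : √(η ^ 2 + 4) ^ 2 = η ^ 2 + 4 := sq_sqrt (by positivity)
  set a := √(η ^ 2 + 4)
  have := phi_pos η
  have := Phi_pos η
  -- `u = (a - η) / 2` is the positive root of `u (u + η) = 1`
  have hu : phi η < (a - η) / 2 * Phi η := by nlinarith
  nlinarith

lemma phi_add_mul_Phi_pos (η : ℝ) : 0 < phi η + η * Phi η := by
  have hB := Phi_mul_sqrt_sub_lt_four_mul_phi η
  have := (abs_lt.1 (abs_lt_sqrt_sq_add (c := 8) (by norm_num) η)).1
  nlinarith [Phi_pos η]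

lemma quadratic_phi_Phi_pos (η : ℝ) :
    0 < 2 * phi η ^ 2 + 3 * η * phi η * Phi η + (η ^ 2 - 1) * Phi η ^ 2 := by
  have hB := Phi_mul_sqrt_sub_lt_four_mul_phi η
  have hb := abs_lt.1 (abs_lt_sqrt_sq_add (c := 8) (by norm_num) η)
  have hb2 : √(η ^ 2 + 8) ^ 2 = η ^ 2 + 8 := sq_sqrt (by positivity)
  set b := √(η ^ 2 + 8)
  have := Phi_pos η
  have h : 2 * phi η ^ 2 + 3 * η * phi η * Phi η + (η ^ 2 - 1) * Phi η ^ 2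
      = 2 * (phi η - (b - 3 * η) / 4 * Phi η) * (phi η + (b + 3 * η) / 4 * Phi η) := by
    linear_combination Phi η ^ 2 / 8 * hb2
  rw [h]
  have h1 : 0 < phi η - (b - 3 * η) / 4 * Phi η := by linarith
  have h2 : 0 < phi η + (b + 3 * η) / 4 * Phi η := by nlinarith
  positivity

lemma one_sub_inv_mul_Phi_sq_lt {η : ℝ} (hη : η ≤ 0) :
    (1 - (η ^ 2 + 2)⁻¹) * Phi η ^ 2 < phi η * (phi η + η * Phi η) := by
  have hB := Phi_mul_sqrt_sub_lt_four_mul_phi η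
  have hb := abs_lt.1 (abs_lt_sqrt_sq_add (c := 8) (by norm_num) η)
  have hb2 : √(η ^ 2 + 8) ^ 2 = η ^ 2 + 8 := sq_sqrt (by positivity)
  set b := √(η ^ 2 + 8)
  have hP := Phi_pos η
  have h1 : (b - 3 * η) / 4 * Phi η < phi η := by linarith
  have h2 : (b - 3 * η) / 4 * ((b - 3 * η) / 4 + η) * Phi η ^ 2
      < phi η * (phi η + η * Phi η) := by
    have : 0 < phi η + (b - 3 * η) / 4 * Phi η + η * Phi η := by nlinarith
    nlinarith [mul_pos (sub_pos.2 h1) this]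
  have h3 : 1 - (η ^ 2 + 2)⁻¹ ≤ (b - 3 * η) / 4 * ((b - 3 * η) / 4 + η) := by
    have hsq : (η * (η ^ 2 + 6)) ^ 2 + 32 = (b * (η ^ 2 + 2)) ^ 2 := by
      linear_combination -(η ^ 2 + 2) ^ 2 * hb2
    have hlt := (abs_lt_of_sq_lt_sq' (a := η * (η ^ 2 + 6)) (b := b * (η ^ 2 + 2)) (by linarith)
      (by positivity)).1
    have hpos : (0 : ℝ) < η ^ 2 + 2 := by positivity
    rw [show 1 - (η ^ 2 + 2)⁻¹ = (η ^ 2 + 1) / (η ^ 2 + 2) by field_simp; ring,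
      div_le_iff₀ hpos]
    nlinarith [mul_le_mul_of_nonpos_left hlt.le hη]
  nlinarith

noncomputable def probitCurvature (η : ℝ) : ℝ := phi η * (phi η + η * Phi η) / Phi η ^ 2

lemma hasDerivAt_probitCurvature (η : ℝ) : HasDerivAt probitCurvature
    (-(phi η * (2 * phi η ^ 2 + 3 * η * phi η * Phi η + (η ^ 2 - 1) * Phi η ^ 2)) / Phi η ^ 3)
    η := by
  have hP := (Phi_pos η).ne'
  refine (((hasDerivAt_phi η).fun_mul ((hasDerivAt_phi η).fun_add ((hasDerivAt_id' η).fun_mul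
    (hasDerivAt_Phi η)))).fun_div ((hasDerivAt_Phi η).fun_pow 2) (by positivity)).congr_deriv ?_
  field_simp
  ring

lemma strictAnti_probitCurvature : StrictAnti probitCurvature :=
  strictAnti_of_hasDerivAt_neg hasDerivAt_probitCurvature fun η =>
    div_neg_of_neg_of_pos (neg_neg_of_pos (mul_pos (phi_pos η) (quadratic_phi_Phi_pos η)))
      (pow_pos (Phi_pos η) 3)

lemma probitCurvature_pos (η : ℝ) : 0 < probitCurvature η :=
  div_pos (mul_pos (phi_pos η) (phi_add_mul_Phi_pos η)) (pow_pos (Phi_pos η) 2)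

lemma probitCurvature_lt_one (η : ℝ) : probitCurvature η < 1 :=
  (div_lt_one (pow_pos (Phi_pos η) 2)).2 (phi_mul_phi_add_mul_Phi_lt_sq η)

lemma tendsto_probitCurvature_atTop : Tendsto probitCurvature atTop (𝓝 0) := by
  have h := ((tendsto_phi_atTop.mul tendsto_phi_atTop).add
    (tendsto_mul_phi_atTop.mul tendsto_Phi_atTop)).div (tendsto_Phi_atTop.pow 2) (by norm_num)
  simp only [mul_zero, zero_mul, add_zero, zero_div] at h
  exact h.congr fun η => by simp only [Pi.div_apply, probitCurvature]; ring

lemma tendsto_probitCurvature_atBot : Tendsto probitCurvature atBot (𝓝 1) := by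
  have hlower : Tendsto (fun η : ℝ => 1 - (η ^ 2 + 2)⁻¹) atBot (𝓝 1) := by
    have hsq : Tendsto (fun η : ℝ => η ^ 2) atBot atTop := by
      simpa [Function.comp_def] using
        (tendsto_pow_atTop (α := ℝ) two_ne_zero).comp tendsto_neg_atBot_atTop
    simpa using tendsto_const_nhds.sub (tendsto_inv_atTop_zero.comp
      (tendsto_atTop_add_const_right _ 2 hsq))
  refine tendsto_of_tendsto_of_tendsto_of_le_of_le' hlower tendsto_const_nhds ?_
    (Eventually.of_forall fun η => (probitCurvature_lt_one η).le)
  filter_upwards [eventually_le_atBot 0] with η hη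
  rw [probitCurvature, le_div_iff₀ (pow_pos (Phi_pos η) 2)]
  exact (one_sub_inv_mul_Phi_sq_lt hη).le

/-- Probit curvature function `T(η) = φ(η)(φ(η) + ηΦ(η))/Φ(η)²`, where `φ` and
`Φ` are the standard normal pdf and cdf, is strictly decreasing with limits `1`
at `−∞` and `0` at `∞`; consequently `0 ≤ T ≤ 1`. -/
theorem stmt_15 :
    let npdf : ℝ → ℝ := fun t => (Real.sqrt (2 * π))⁻¹ * Real.exp (-t ^ 2 / 2)
    let ncdf : ℝ → ℝ := fun η => ∫ t in Set.Iic η, npdf t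
    let T : ℝ → ℝ := fun η => npdf η * (npdf η + η * ncdf η) / (ncdf η) ^ 2
    StrictAnti T ∧ Filter.Tendsto T Filter.atBot (nhds 1) ∧
      Filter.Tendsto T Filter.atTop (nhds 0) ∧
      ∀ η : ℝ, T η ∈ Set.Icc (0 : ℝ) 1 :=
  ⟨strictAnti_probitCurvature, tendsto_probitCurvature_atBot, tendsto_probitCurvature_atTop,
    fun η => ⟨(probitCurvature_pos η).le, (probitCurvature_lt_one η).le⟩⟩
end

section
/- For probit regression, with h(η) = y log Φ(η) + (1−y) log Φ(−η) and y ∈ {0,1}, the second derivative satisfies 0 ≤ −h''(η) ≤ 1 for all η ∈ ℝ. -/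
/-!
Write `λ = φ / Φ` for the inverse Mills ratio. Then `(log Φ)' = λ` and `λ' = -λ (λ + η)`, so
`-h''(η) = y λ(η) (λ(η) + η) + (1 - y) λ(-η) (λ(-η) - η)`, and it suffices to show
`0 ≤ λ (λ + η) ≤ 1`, i.e. `φ + ηΦ ≥ 0` and `Φ² - φ (φ + ηΦ) ≥ 0`.
The functions `φ + ηΦ`, `(1 + η²) Φ + ηφ` and `Φ² - φ (φ + ηΦ)` all vanish at `-∞`, and their
derivatives are `Φ`, `2 (φ + ηΦ)` and `φ ((1 + η²) Φ + ηφ)`; so each is nonnegative once the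
previous one is.
-/

open Real MeasureTheory Set Filter Topology

theorem hasDerivAt_integral_Iic {E : Type*} [NormedAddCommGroup E] [NormedSpace ℝ E]
    [CompleteSpace E] {f : ℝ → E} (hf : Integrable f) {x : ℝ} (hx : ContinuousAt f x) :
    HasDerivAt (fun s => ∫ t in Iic s, f t) (f x) x := by
  have hsplit : (fun s => ∫ t in Iic s, f t) =
      fun s => (∫ t in Iic 0, f t) + ∫ t in (0 : ℝ)..s, f t := by
    funext s
    rw [← intervalIntegral.integral_Iic_sub_Iic hf.integrableOn hf.integrableOn, add_sub_cancel]
  rw [hsplit]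
  exact (intervalIntegral.integral_hasDerivAt_right hf.intervalIntegrable
    (hf.aestronglyMeasurable.stronglyMeasurableAtFilter) hx).const_add _

theorem nonneg_of_hasDerivAt_nonneg_of_tendsto_atBot {f f' : ℝ → ℝ} {a : ℝ}
    (hf : ∀ x ∈ Iic a, HasDerivAt f (f' x) x) (hf' : ∀ x ∈ Iic a, 0 ≤ f' x)
    (hlim : Tendsto f atBot (𝓝 0)) {x : ℝ} (hx : x ≤ a) : 0 ≤ f x := by
  have hmono : MonotoneOn f (Iic a) := by
    refine monotoneOn_of_deriv_nonneg (convex_Iic a)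
      (fun t ht => (hf t ht).continuousAt.continuousWithinAt) (fun t ht => ?_) fun t ht => ?_
    all_goals rw [interior_Iic] at ht
    · exact (hf t (mem_Iio.1 ht).le).differentiableAt.differentiableWithinAt
    · exact (hf t (mem_Iio.1 ht).le).deriv ▸ hf' t (mem_Iio.1 ht).le
  refine le_of_tendsto hlim ?_
  filter_upwards [eventually_le_atBot x] with t ht
  exact hmono (ht.trans hx) hx ht

noncomputable def npdf (t : ℝ) : ℝ := (√(2 * π))⁻¹ * exp (-t ^ 2 / 2)

noncomputable def ncdf (s : ℝ) : ℝ := ∫ t in Iic s, npdf t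

theorem npdf_pos (t : ℝ) : 0 < npdf t := by
  unfold npdf; positivity

theorem continuous_npdf : Continuous npdf := by
  unfold npdf; fun_prop

theorem integrable_npdf : Integrable npdf := by
  have h := (integrable_exp_neg_mul_sq one_half_pos).const_mul (√(2 * π))⁻¹
  refine h.congr (Eventually.of_forall fun t => ?_)
  simp only [npdf, neg_div, neg_mul]; ring_nf

theorem hasDerivAt_npdf (t : ℝ) : HasDerivAt npdf (-t * npdf t) t := by
  have hexp : HasDerivAt (fun s : ℝ => -s ^ 2 / 2) (-t) t :=
    ((hasDerivAt_pow 2 t).neg.div_const 2).congr_deriv (by ring)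
  exact (hexp.exp.const_mul (√(2 * π))⁻¹).congr_deriv (by simp only [npdf]; ring)

theorem hasDerivAt_ncdf (x : ℝ) : HasDerivAt ncdf (npdf x) x :=
  hasDerivAt_integral_Iic integrable_npdf continuous_npdf.continuousAt

theorem ncdf_pos (x : ℝ) : 0 < ncdf x := by
  rw [ncdf, setIntegral_pos_iff_support_of_nonneg_ae
    (Eventually.of_forall fun t => (npdf_pos t).le) integrable_npdf.integrableOn,
    Function.support_eq_univ fun t => (npdf_pos t).ne', univ_inter, volume_Iic]
  exact ENNReal.zero_lt_top

theorem tendsto_ncdf_atBot : Tendsto ncdf atBot (𝓝 0) :=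
  tendsto_integral_Iic_zero tendsto_id

theorem tendsto_pow_mul_npdf_atBot (n : ℕ) : Tendsto (fun x => x ^ n * npdf x) atBot (𝓝 0) := by
  have h := ((tendsto_rpow_abs_mul_exp_neg_mul_sq_cocompact one_half_pos n).mono_left
    atBot_le_cocompact).const_mul (√(2 * π))⁻¹
  rw [mul_zero] at h
  refine squeeze_zero_norm (fun x => le_of_eq ?_) h
  rw [norm_mul, norm_pow, Real.norm_eq_abs, Real.norm_of_nonneg (npdf_pos x).le, rpow_natCast, npdf]
  ring_nf

theorem ncdf_le_npdf {x : ℝ} (hx : x ≤ -1) : ncdf x ≤ npdf x := by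
  have h := nonneg_of_hasDerivAt_nonneg_of_tendsto_atBot (f := fun t => npdf t - ncdf t)
    (fun t _ => (hasDerivAt_npdf t).sub (hasDerivAt_ncdf t))
    (fun t ht => by nlinarith [npdf_pos t, mem_Iic.1 ht])
    (by simpa using (tendsto_pow_mul_npdf_atBot 0).sub tendsto_ncdf_atBot) hx
  exact sub_nonneg.1 h

theorem tendsto_pow_mul_ncdf_atBot (n : ℕ) : Tendsto (fun x => x ^ n * ncdf x) atBot (𝓝 0) := by
  refine squeeze_zero_norm' (a := fun x => ‖x ^ n * npdf x‖) ?_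
    (by simpa using (tendsto_pow_mul_npdf_atBot n).norm)
  filter_upwards [eventually_le_atBot (-1)] with x hx
  rw [norm_mul, norm_mul, Real.norm_of_nonneg (ncdf_pos x).le, Real.norm_of_nonneg (npdf_pos x).le]
  exact mul_le_mul_of_nonneg_left (ncdf_le_npdf hx) (norm_nonneg _)

theorem npdf_add_mul_ncdf_nonneg (x : ℝ) : 0 ≤ npdf x + x * ncdf x := by
  refine nonneg_of_hasDerivAt_nonneg_of_tendsto_atBot (f := fun t => npdf t + t * ncdf t)
    (fun t _ => ?_) (fun t _ => (ncdf_pos t).le) ?_ le_rfl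
  · exact ((hasDerivAt_npdf t).add ((hasDerivAt_id t).mul (hasDerivAt_ncdf t))).congr_deriv
      (by simp only [id]; ring)
  · simpa using (tendsto_pow_mul_npdf_atBot 0).add (tendsto_pow_mul_ncdf_atBot 1)

theorem one_add_sq_mul_ncdf_add_mul_npdf_nonneg (x : ℝ) :
    0 ≤ (1 + x ^ 2) * ncdf x + x * npdf x := by
  refine nonneg_of_hasDerivAt_nonneg_of_tendsto_atBot
    (f := fun t => (1 + t ^ 2) * ncdf t + t * npdf t) (fun t _ => ?_)
    (fun t _ => mul_nonneg zero_le_two (npdf_add_mul_ncdf_nonneg t)) ?_ le_rfl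
  · exact ((((hasDerivAt_pow 2 t).const_add 1).mul (hasDerivAt_ncdf t)).add
      ((hasDerivAt_id t).mul (hasDerivAt_npdf t))).congr_deriv (by simp only [id]; ring)
  · have h := ((tendsto_pow_mul_ncdf_atBot 0).add (tendsto_pow_mul_ncdf_atBot 2)).add
      (tendsto_pow_mul_npdf_atBot 1)
    simp only [add_zero] at h
    exact h.congr fun t => by ring

theorem npdf_mul_npdf_add_mul_ncdf_le_ncdf_sq (x : ℝ) :
    npdf x * (npdf x + x * ncdf x) ≤ ncdf x ^ 2 := by
  have h := nonneg_of_hasDerivAt_nonneg_of_tendsto_atBot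
    (f := fun t => ncdf t ^ 2 - npdf t * (npdf t + t * ncdf t))
    (f' := fun t => npdf t * ((1 + t ^ 2) * ncdf t + t * npdf t)) (fun t _ => ?_)
    (fun t _ => mul_nonneg (npdf_pos t).le (one_add_sq_mul_ncdf_add_mul_npdf_nonneg t)) ?_
    (le_refl x)
  · exact sub_nonneg.1 h
  · exact (((hasDerivAt_ncdf t).pow 2).sub ((hasDerivAt_npdf t).mul ((hasDerivAt_npdf t).add
      ((hasDerivAt_id t).mul (hasDerivAt_ncdf t))))).congr_deriv
      (by simp only [Pi.add_apply, Pi.mul_apply, id]; ring)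
  · have h := ((tendsto_pow_mul_ncdf_atBot 0).pow 2).sub ((tendsto_pow_mul_npdf_atBot 0).mul
      ((tendsto_pow_mul_npdf_atBot 0).add (tendsto_pow_mul_ncdf_atBot 1)))
    simpa using h

noncomputable def invMills (x : ℝ) : ℝ := npdf x / ncdf x

theorem hasDerivAt_log_ncdf (x : ℝ) : HasDerivAt (fun s => log (ncdf s)) (invMills x) x :=
  (hasDerivAt_ncdf x).log (ncdf_pos x).ne'

theorem hasDerivAt_invMills (x : ℝ) :
    HasDerivAt invMills (-(invMills x * (invMills x + x))) x := by
  have hΦ := (ncdf_pos x).ne'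
  refine ((hasDerivAt_npdf x).div (hasDerivAt_ncdf x) hΦ).congr_deriv ?_
  simp only [invMills]
  field_simp
  ring

theorem invMills_mul_invMills_add_mem_Icc (x : ℝ) : invMills x * (invMills x + x) ∈ Icc 0 1 := by
  have hΦ := ncdf_pos x
  have heq : invMills x * (invMills x + x) = npdf x * (npdf x + x * ncdf x) / ncdf x ^ 2 := by
    simp only [invMills]; field_simp
  rw [heq]
  exact ⟨div_nonneg (mul_nonneg (npdf_pos x).le (npdf_add_mul_ncdf_nonneg x)) (sq_nonneg _),
    (div_le_one (pow_pos hΦ 2)).2 (npdf_mul_npdf_add_mul_ncdf_le_ncdf_sq x)⟩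

theorem deriv_deriv_probit_logLik (y η : ℝ) :
    deriv (deriv fun s => y * log (ncdf s) + (1 - y) * log (ncdf (-s))) η =
      -(y * (invMills η * (invMills η + η)) +
        (1 - y) * (invMills (-η) * (invMills (-η) + -η))) := by
  have hd : deriv (fun s => y * log (ncdf s) + (1 - y) * log (ncdf (-s))) =
      fun s => y * invMills s - (1 - y) * invMills (-s) := by
    funext s
    exact (((hasDerivAt_log_ncdf s).const_mul y).add
      (((hasDerivAt_log_ncdf (-s)).comp s (hasDerivAt_neg s)).const_mul (1 - y))).deriv.trans
      (by ring)
  rw [hd]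
  exact (((hasDerivAt_invMills η).const_mul y).sub
    (((hasDerivAt_invMills (-η)).comp η (hasDerivAt_neg η)).const_mul (1 - y))).deriv.trans
    (by ring)

/-- Probit regression second derivative bound: with
`h(η) = y log Φ(η) + (1−y) log Φ(−η)` and `y ∈ {0,1}`,
`0 ≤ −h''(η) ≤ 1` for all `η`. -/
theorem stmt_16 (y : ℝ) (hy : y = 0 ∨ y = 1) (η : ℝ) :
    let npdf : ℝ → ℝ := fun t => (Real.sqrt (2 * π))⁻¹ * Real.exp (-t ^ 2 / 2)
    let ncdf : ℝ → ℝ := fun s => ∫ t in Set.Iic s, npdf t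
    let h : ℝ → ℝ := fun s => y * Real.log (ncdf s) + (1 - y) * Real.log (ncdf (-s))
    0 ≤ -deriv (deriv h) η ∧ -deriv (deriv h) η ≤ 1 := by
  show 0 ≤ -deriv (deriv fun s => y * log (ncdf s) + (1 - y) * log (ncdf (-s))) η ∧
    -deriv (deriv fun s => y * log (ncdf s) + (1 - y) * log (ncdf (-s))) η ≤ 1
  rw [deriv_deriv_probit_logLik, neg_neg]
  obtain ⟨hpos, hle⟩ := invMills_mul_invMills_add_mem_Icc η
  obtain ⟨hpos', hle'⟩ := invMills_mul_invMills_add_mem_Icc (-η)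
  rcases hy with rfl | rfl <;> constructor <;> linarith
end

section
/- For the Poisson regression log-likelihood h(η) = y log log(1+e^η) − log(1+e^η) − log(y!) with y a nonnegative integer, h'(η) = y·S(η) − e^η/(1+e^η) where S(η) = e^η/((1+e^η)log(1+e^η)), is strictly decreasing in η with limits y as η → −∞ and −1 as η → ∞; hence |h'(η)| ≤ max(1, y) for all η ∈ ℝ. -/
/-!
Write `σ` for the sigmoid and `softplus η = log (1 + e^η)`, so that `softplus' = σ`,
`σ' = σ (1 - σ)` and `h' = y σ / softplus - σ`. The derivative of `σ / softplus` has the sign of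
`softplus - e^η`, which is negative because `log (1 + t) < t`; with `σ` increasing this makes `h'`
strictly decreasing. As `η → -∞` the bounds `σ ≤ softplus < e^η` squeeze `σ / softplus` between
`1 - σ` and `1`, so `h' → y`; as `η → ∞`, `σ → 1` and `softplus → ∞`, so `h' → -1`. Monotonicity
then traps `h'` in `[-1, y]`.
-/

open Real Filter Topology

namespace Real

lemma one_sub_sigmoid (x : ℝ) : 1 - sigmoid x = (1 + exp x)⁻¹ := by
  rw [← sigmoid_neg, sigmoid_def, neg_neg]

lemma exp_div_one_add_exp (x : ℝ) : exp x / (1 + exp x) = sigmoid x := by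
  rw [sigmoid_def, exp_neg]
  field_simp
  ring

lemma one_sub_sigmoid_mul_exp (x : ℝ) : (1 - sigmoid x) * exp x = sigmoid x := by
  rw [one_sub_sigmoid, ← exp_div_one_add_exp, inv_mul_eq_div]

noncomputable def softplus (x : ℝ) : ℝ := log (1 + exp x)

lemma one_lt_one_add_exp (x : ℝ) : 1 < 1 + exp x := lt_add_of_pos_right 1 (exp_pos x)

lemma softplus_pos (x : ℝ) : 0 < softplus x := log_pos (one_lt_one_add_exp x)

lemma softplus_lt_exp (x : ℝ) : softplus x < exp x := by
  have := log_lt_sub_one_of_pos (by linarith [one_lt_one_add_exp x])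
    (one_lt_one_add_exp x).ne'
  rwa [add_sub_cancel_left] at this

lemma sigmoid_le_softplus (x : ℝ) : sigmoid x ≤ softplus x := by
  rw [← sub_sub_cancel 1 (sigmoid x), one_sub_sigmoid]
  exact one_sub_inv_le_log_of_pos (by linarith [one_lt_one_add_exp x])

lemma hasDerivAt_softplus (x : ℝ) : HasDerivAt softplus (sigmoid x) x := by
  have := ((hasDerivAt_exp x).const_add 1).log (by linarith [one_lt_one_add_exp x])
  rwa [exp_div_one_add_exp] at this

lemma tendsto_softplus_atTop : Tendsto softplus atTop atTop :=
  tendsto_log_atTop.comp (tendsto_atTop_add_const_left _ 1 tendsto_exp_atTop)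

end Real

section PoissonScore

lemma strictAnti_sigmoid_div_softplus : StrictAnti fun x => sigmoid x / softplus x := by
  refine strictAnti_of_hasDerivAt_neg
    (fun x => (hasDerivAt_sigmoid x).div (hasDerivAt_softplus x) (softplus_pos x).ne') fun x => ?_
  refine div_neg_of_neg_of_pos ?_ (pow_pos (softplus_pos x) 2)
  -- `sigmoid = (1 - sigmoid) * exp` turns the numerator into `σ (1 - σ) (softplus - exp)`.
  calc sigmoid x * (1 - sigmoid x) * softplus x - sigmoid x * sigmoid x
      = sigmoid x * (1 - sigmoid x) * (softplus x - exp x) := by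
        nth_rewrite 3 [← one_sub_sigmoid_mul_exp x]; ring
    _ < 0 := mul_neg_of_pos_of_neg
      (mul_pos (sigmoid_pos x) (sub_pos.2 (sigmoid_lt_one x))) (sub_neg.2 (softplus_lt_exp x))

lemma tendsto_sigmoid_div_softplus_atTop :
    Tendsto (fun x => sigmoid x / softplus x) atTop (𝓝 0) :=
  tendsto_sigmoid_atTop.div_atTop tendsto_softplus_atTop

lemma tendsto_sigmoid_div_softplus_atBot :
    Tendsto (fun x => sigmoid x / softplus x) atBot (𝓝 1) := by
  have hlower : ∀ x, 1 - sigmoid x ≤ sigmoid x / softplus x := fun x => by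
    calc 1 - sigmoid x = sigmoid x / exp x := by
          rw [eq_div_iff (exp_pos x).ne', one_sub_sigmoid_mul_exp]
      _ ≤ sigmoid x / softplus x :=
          div_le_div_of_nonneg_left (sigmoid_nonneg x) (softplus_pos x) (softplus_lt_exp x).le
  have hupper : ∀ x, sigmoid x / softplus x ≤ 1 := fun x =>
    div_le_one_of_le₀ (sigmoid_le_softplus x) (softplus_pos x).le
  refine tendsto_of_tendsto_of_tendsto_of_le_of_le ?_ tendsto_const_nhds hlower hupper
  simpa using tendsto_sigmoid_atBot.const_sub 1

noncomputable def poissonScore (y η : ℝ) : ℝ := y * (sigmoid η / softplus η) - sigmoid η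

variable {y : ℝ}

lemma strictAnti_poissonScore (hy : 0 ≤ y) : StrictAnti (poissonScore y) := fun a b hab => by
  have := mul_le_mul_of_nonneg_left (strictAnti_sigmoid_div_softplus hab).le hy
  have := sigmoid_strictMono hab
  simp only [poissonScore]
  linarith

lemma tendsto_poissonScore_atBot : Tendsto (poissonScore y) atBot (𝓝 y) := by
  have := (tendsto_sigmoid_div_softplus_atBot.const_mul y).sub tendsto_sigmoid_atBot
  rwa [mul_one, sub_zero] at this

lemma tendsto_poissonScore_atTop : Tendsto (poissonScore y) atTop (𝓝 (-1)) := by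
  have := (tendsto_sigmoid_div_softplus_atTop.const_mul y).sub tendsto_sigmoid_atTop
  rwa [mul_zero, zero_sub] at this

lemma abs_poissonScore_le (hy : 0 ≤ y) (η : ℝ) : |poissonScore y η| ≤ max 1 y := by
  have hanti := (strictAnti_poissonScore hy).antitone
  have hupper := hanti.ge_of_tendsto tendsto_poissonScore_atBot η
  have hlower := hanti.le_of_tendsto tendsto_poissonScore_atTop η
  rw [abs_le]
  constructor <;> linarith [le_max_left 1 y, le_max_right 1 y]

end PoissonScore

/-- For the Poisson regression log-likelihood with mean `log(1+e^η)`, the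
derivative `h'(η) = y·S(η) − e^η/(1+e^η)`, with
`S(η) = e^η/((1+e^η)log(1+e^η))`, is strictly decreasing with limits `y` at
`−∞` and `−1` at `∞`; hence `|h'(η)| ≤ max(1, y)` for all `η`. -/
theorem stmt_18 (y : ℕ) :
    let S : ℝ → ℝ :=
      fun η => Real.exp η / ((1 + Real.exp η) * Real.log (1 + Real.exp η))
    let h' : ℝ → ℝ := fun η => (y : ℝ) * S η - Real.exp η / (1 + Real.exp η)
    StrictAnti h' ∧ Filter.Tendsto h' Filter.atBot (nhds (y : ℝ)) ∧
      Filter.Tendsto h' Filter.atTop (nhds (-1)) ∧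
      ∀ η : ℝ, |h' η| ≤ max 1 (y : ℝ) := by
  intro S h'
  have h'_eq : h' = poissonScore y := by
    funext η
    simp only [h', S, poissonScore, softplus, ← exp_div_one_add_exp, div_div]
  rw [h'_eq]
  exact ⟨strictAnti_poissonScore y.cast_nonneg, tendsto_poissonScore_atBot,
    tendsto_poissonScore_atTop, abs_poissonScore_le y.cast_nonneg⟩
end
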